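/- arXiv:2406.10752 — 5 statements merged into one kernel-verified Lean document; each statement's English description precedes it below -/
import Mathlib

section
/- For every real α ≥ 1 there exists a chore-division instance with three agents and six chores, in which every agent's cost function is normalized, monotone and superadditive, that admits no α-EFX allocation. In particular, an EFX allocation need not exist for three agents with superadditive cost functions, and no bounded approximation factor for EFX is achievable in general. -/
/-- `X` is an allocation: pairwise disjoint bundles covering all chores. -/
def IsAllocation {M : Type*} {n : ℕ} (X : Fin n → Finset M) : Prop :=
  (∀ i j : Fin n, i ≠ j → Disjoint (X i) (X j)) ∧ (∀ e : M, ∃ i : Fin n, e ∈ X i)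

/-- `X` is `α`-EFX for cost functions `c`. -/
def IsAlphaEFX {M : Type*} [DecidableEq M] {n : ℕ} (α : ℝ)
    (c : Fin n → Finset M → ℝ) (X : Fin n → Finset M) : Prop :=
  ∀ i j : Fin n, ∀ e ∈ X i, c i (X i \ {e}) ≤ α * c i (X j)

/-- Level tables for the three agents, indexed by the bitmask encoding of a subset
of the six chores (bit `e` set iff chore `e` is in the subset).  Found by a SAT
search: in every allocation, some agent `i` has a chore `e` such that the level of
`Xᵢ \ {e}` strictly exceeds the level of some bundle `Xⱼ` (all seen by agent `i`). -/
def levTable : Fin 3 → List ℕ :=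
  ![[0,2,1,3,0,2,2,4,1,3,3,5,2,4,3,5,0,3,1,5,0,4,2,5,1,5,3,6,3,6,4,7,0,4,1,5,0,5,3,6,1,6,4,7,3,6,5,8,3,5,4,6,3,5,5,7,4,6,6,8,5,7,6,8],
    [0,2,1,3,0,3,1,4,1,3,3,5,1,5,3,6,0,3,1,5,3,5,4,6,1,5,3,6,4,6,6,8,0,2,2,4,0,5,3,6,2,4,3,5,3,6,5,8,0,5,3,6,3,5,5,7,4,6,5,8,5,7,6,8],
    [0,2,1,3,0,2,1,3,1,3,3,5,1,4,3,5,0,2,2,4,0,3,3,5,2,4,3,5,3,5,6,8,0,2,1,5,3,5,4,6,1,5,3,6,4,6,6,8,0,5,3,6,3,5,5,7,5,7,6,8,5,7,6,8]]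

/-- The level of a bundle `S` for agent `i`. -/
def levF (i : Fin 3) (S : Finset (Fin 6)) : ℕ := (levTable i).getD (∑ e ∈ S, 2 ^ e.val) 0

lemma lev_empty : ∀ i, levF i ∅ = 0 := by decide

set_option maxHeartbeats 4000000 in
set_option maxRecDepth 10000 in
lemma lev_mono : ∀ i, ∀ S T : Finset (Fin 6), S ⊆ T → levF i S ≤ levF i T := by decide

set_option maxHeartbeats 4000000 in
set_option maxRecDepth 10000 in
lemma lev_superadd : ∀ i, ∀ S T : Finset (Fin 6), Disjoint S T →
    levF i S + levF i T ≤ levF i (S ∪ T) := by decide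

set_option maxHeartbeats 4000000 in
set_option maxRecDepth 10000 in
lemma lev_key : ∀ a : Fin 6 → Fin 3, ∃ i j : Fin 3, ∃ e : Fin 6, a e = i ∧
    levF i (Finset.univ.filter (fun x => a x = j)) <
    levF i ((Finset.univ.filter (fun x => a x = i)) \ {e}) := by decide

/-- For every `α ≥ 1` there is an instance with three agents and six chores, all cost
functions being nonnegative, normalized, monotone and superadditive, admitting no
`α`-EFX allocation. -/
theorem no_alpha_efx_superadditive (α : ℝ) (hα : 1 ≤ α) :
    ∃ c : Fin 3 → Finset (Fin 6) → ℝ,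
      (∀ i S, 0 ≤ c i S) ∧
      (∀ i, c i ∅ = 0) ∧
      (∀ i, ∀ S T : Finset (Fin 6), S ⊆ T → c i S ≤ c i T) ∧
      (∀ i, ∀ S T : Finset (Fin 6), Disjoint S T → c i S + c i T ≤ c i (S ∪ T)) ∧
      (∀ X : Fin 3 → Finset (Fin 6), IsAllocation X → ¬ IsAlphaEFX α c X) := by
  have hβ1 : (1 : ℝ) ≤ α + 2 := by linarith
  have hβ0 : (0 : ℝ) ≤ α + 2 := by linarith
  have hone : ∀ k : ℕ, (1 : ℝ) ≤ (α + 2) ^ k := fun k => one_le_pow₀ hβ1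
  refine ⟨fun i S => (α + 2) ^ (levF i S) - 1, ?_, ?_, ?_, ?_, ?_⟩
  · intro i S
    show (0:ℝ) ≤ (α + 2) ^ (levF i S) - 1
    have := hone (levF i S); linarith
  · intro i
    show (α + 2) ^ (levF i ∅) - 1 = 0
    rw [lev_empty i, pow_zero]; ring
  · intro i S T hST
    show (α + 2) ^ (levF i S) - 1 ≤ (α + 2) ^ (levF i T) - 1
    have h := lev_mono i S T hST
    have := pow_le_pow_right₀ hβ1 h
    linarith
  · intro i S T hST
    show (α + 2) ^ (levF i S) - 1 + ((α + 2) ^ (levF i T) - 1) ≤ (α + 2) ^ (levF i (S ∪ T)) - 1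
    have hn := lev_superadd i S T hST
    have hpow : (α + 2) ^ (levF i S + levF i T) ≤ (α + 2) ^ (levF i (S ∪ T)) :=
      pow_le_pow_right₀ hβ1 hn
    have key : (α + 2) ^ (levF i S) + (α + 2) ^ (levF i T)
        ≤ (α + 2) ^ (levF i S + levF i T) + 1 := by
      rcases Nat.eq_zero_or_pos (levF i S) with ha | ha
      · simp [ha]
        linarith [hone (levF i T)]
      · rcases Nat.eq_zero_or_pos (levF i T) with hb | hb
        · simp [hb]
        · have hxa : (α + 2) ≤ (α + 2) ^ (levF i S) := by
            calc (α + 2) = (α + 2) ^ 1 := (pow_one _).symm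
            _ ≤ (α + 2) ^ (levF i S) := pow_le_pow_right₀ hβ1 ha
          have hxb : (α + 2) ≤ (α + 2) ^ (levF i T) := by
            calc (α + 2) = (α + 2) ^ 1 := (pow_one _).symm
            _ ≤ (α + 2) ^ (levF i T) := pow_le_pow_right₀ hβ1 hb
          rw [pow_add]
          nlinarith [hxa, hxb]
    linarith
  · intro X hX hEFX
    obtain ⟨hdisj, hcov⟩ := hX
    choose a ha using hcov
    have hXi : ∀ i, X i = Finset.univ.filter (fun e => a e = i) := by
      intro i
      ext e
      simp only [Finset.mem_filter, Finset.mem_univ, true_and]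
      constructor
      · intro he
        by_contra hne
        exact (Finset.disjoint_left.mp (hdisj (a e) i hne) (ha e)) he
      · intro h
        exact h ▸ ha e
    obtain ⟨i, j, e, hae, hlt⟩ := lev_key a
    have heXi : e ∈ X i := hae ▸ ha e
    have hcmp := hEFX i j e heXi
    rw [hXi i, hXi j] at hcmp
    dsimp only at hcmp
    set l := levF i (Finset.univ.filter (fun x => a x = j)) with hl
    set L := levF i ((Finset.univ.filter (fun x => a x = i)) \ {e}) with hL
    have h1 : (α + 2) ^ (l + 1) ≤ (α + 2) ^ L := pow_le_pow_right₀ hβ1 hlt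
    rw [pow_succ] at h1
    have h2 := hone l
    nlinarith [hcmp, h1, h2]
end

section
/- Let a₁,…,a_n be positive integers with Σⱼ aⱼ = 3S and aⱼ < S for all j. Consider the chore-division instance with three agents and n+3 chores M = {a₁,…,a_n, b₁, b₂, b₃}; write A = {a₁,…,a_n} and B = {b₁, b₂, b₃}, and define for each agent i ∈ {1,2,3} the cost function c_i : 2^M → [0,∞] by: c_i(X) = ∞ if (B \ {b_i}) ⊆ X, or if b_i ∈ X and X ∩ A ≠ ∅; otherwise c_i(X) = Σ_{aⱼ ∈ X} aⱼ. Then this instance admits an EFX allocation if and only if {1,…,n} can be partitioned into three sets I₁, I₂, I₃ with Σ_{j ∈ I₁} aⱼ = Σ_{j ∈ I₂} aⱼ = Σ_{j ∈ I₃} aⱼ = S. -/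
open scoped ENNReal

/-- The cost function of agent `i` in the reduction instance: the chores are
`Fin n ⊕ Fin 3`, where `Sum.inl j` is the chore corresponding to the integer `a j`
and `Sum.inr j` is the zero-cost chore `b j`.  The cost of a bundle `X` is `∞` if
`B \ {b_i} ⊆ X`, or if `b_i ∈ X` and `X ∩ A ≠ ∅`; otherwise it is the sum of the
integers of the `A`-chores in `X`. -/
noncomputable def redCost (n : ℕ) (a : Fin n → ℕ) (i : Fin 3)
    (X : Finset (Fin n ⊕ Fin 3)) : ℝ≥0∞ :=
  if (∀ j : Fin 3, j ≠ i → Sum.inr j ∈ X) ∨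
     (Sum.inr i ∈ X ∧ ∃ j : Fin n, Sum.inl j ∈ X) then ⊤
  else ∑ j ∈ Finset.univ.filter (fun j : Fin n => Sum.inl j ∈ X), (a j : ℝ≥0∞)

section EfxAux

abbrev RC {n : ℕ} (i : Fin 3) (Y : Finset (Fin n ⊕ Fin 3)) : Prop :=
  (∀ j : Fin 3, j ≠ i → Sum.inr j ∈ Y) ∨ (Sum.inr i ∈ Y ∧ ∃ j : Fin n, Sum.inl j ∈ Y)

lemma redCost_eq_top {n : ℕ} (a : Fin n → ℕ) {i : Fin 3} {Y : Finset (Fin n ⊕ Fin 3)}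
    (h : RC i Y) : redCost n a i Y = ⊤ := by
  rw [redCost, if_pos h]

lemma redCost_eq_sum {n : ℕ} (a : Fin n → ℕ) {i : Fin 3} {Y : Finset (Fin n ⊕ Fin 3)}
    (h : ¬ RC i Y) :
    redCost n a i Y
      = ((∑ j ∈ Finset.univ.filter (fun j => Sum.inl j ∈ Y), a j : ℕ) : ℝ≥0∞) := by
  rw [redCost, if_neg h, Nat.cast_sum]

lemma not_RC {n : ℕ} {i : Fin 3} {Y : Finset (Fin n ⊕ Fin 3)}
    (h1 : ∃ r, r ≠ i ∧ Sum.inr r ∉ Y) (h2 : Sum.inr i ∈ Y → ∀ j : Fin n, Sum.inl j ∉ Y) :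
    ¬ RC i Y := by
  rintro (hall | ⟨hb, j, hj⟩)
  · obtain ⟨r, hr, hr'⟩ := h1; exact hr' (hall r hr)
  · exact h2 hb j hj

lemma fadd (i : Fin 3) : i + 1 ≠ i ∧ i + 2 ≠ i ∧ i + 1 ≠ i + 2 := by
  revert i; decide

lemma fin3_cases (r i : Fin 3) : r = i ∨ r = i + 1 ∨ r = i + 2 := by
  revert r i; decide

lemma fin3_third (p q : Fin 3) (h : p ≠ q) :
    ∃ m, m ≠ p ∧ m ≠ q ∧ ∀ r, r = p ∨ r = q ∨ r = m := by
  revert p q; decide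

lemma fin3_pair (z m : Fin 3) : ∃ r, r ≠ z ∧ r ≠ m := by
  revert z m; decide

lemma fin3_two (i p q r : Fin 3) (hpq : p ≠ q) (hip : i ≠ p) (hiq : i ≠ q) (hri : r ≠ i) :
    r = p ∨ r = q := by
  revert i p q r; decide

lemma f3sum (f : Fin 3 → ℕ) (i w z : Fin 3) (hiw : i ≠ w) (hiz : i ≠ z) (hwz : w ≠ z) :
    f 0 + f 1 + f 2 = f i + f w + f z := by
  have tri : ∀ x : Fin 3, x = 0 ∨ x = 1 ∨ x = 2 := by decide
  rcases tri i with rfl | rfl | rfl <;> rcases tri w with rfl | rfl | rfl <;>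
      rcases tri z with rfl | rfl | rfl <;>
    first
      | omega
      | (exact absurd rfl hiw)
      | (exact absurd rfl hiz)
      | (exact absurd rfl hwz)

lemma Lfin {n : ℕ} {X : Fin 3 → Finset (Fin n ⊕ Fin 3)}
    (hdisj : ∀ i j : Fin 3, i ≠ j → Disjoint (X i) (X j))
    {i p : Fin 3} (hp : Sum.inr p ∈ X i) :
    ∃ w, w ≠ i ∧ ¬ RC i (X w) := by
  by_contra h
  push_neg at h
  have huniq : ∀ (e : Fin n ⊕ Fin 3) (i j : Fin 3), e ∈ X i → e ∈ X j → i = j := by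
    intro e i j h1 h2; by_contra hne
    exact (Finset.disjoint_left.mp (hdisj i j hne)) h1 h2
  obtain ⟨f1, f2, f3⟩ := fadd i
  have h1 := h (i + 1) f1
  have h2 := h (i + 2) f2
  rcases h1 with hA1 | ⟨hb1, -⟩ <;> rcases h2 with hA2 | ⟨hb2, -⟩
  · exact f3 (huniq (Sum.inr (i + 1)) _ _ (hA1 (i + 1) f1) (hA2 (i + 1) f1))
  · by_cases hpi : p = i
    · rw [hpi] at hp; exact f2 (huniq (Sum.inr i) _ _ hb2 hp)
    · exact f1 (huniq (Sum.inr p) _ _ (hA1 p hpi) hp)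
  · by_cases hpi : p = i
    · rw [hpi] at hp; exact f1 (huniq (Sum.inr i) _ _ hb1 hp)
    · exact f2 (huniq (Sum.inr p) _ _ (hA2 p hpi) hp)
  · exact f3 (huniq (Sum.inr i) _ _ hb1 hb2)

lemma Ltop {n : ℕ} {a : Fin n → ℕ} {X : Fin 3 → Finset (Fin n ⊕ Fin 3)}
    (hdisj : ∀ i j : Fin 3, i ≠ j → Disjoint (X i) (X j))
    (hefx : ∀ i j : Fin 3, ∀ e ∈ X i, redCost n a i (X i \ {e}) ≤ redCost n a i (X j))
    {i p : Fin 3} {e : Fin n ⊕ Fin 3} (hp : Sum.inr p ∈ X i) (he : e ∈ X i)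
    (hc : RC i (X i \ {e})) : False := by
  obtain ⟨w, _, hnc⟩ := Lfin hdisj hp
  have h := hefx i w e he
  rw [redCost_eq_top a hc, redCost_eq_sum a hnc, top_le_iff] at h
  exact ENNReal.natCast_ne_top _ h

end EfxAux

/-- The reduction instance admits an EFX allocation iff the integers can be
3-way partitioned into sets of equal sum `S`. -/
theorem efx_iff_three_way_partition (n S : ℕ) (a : Fin n → ℕ)
    (hpos : ∀ j, 0 < a j) (hsum : ∑ j, a j = 3 * S) (hlt : ∀ j, a j < S) :
    (∃ X : Fin 3 → Finset (Fin n ⊕ Fin 3), IsAllocation X ∧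
        ∀ i j : Fin 3, ∀ e ∈ X i, redCost n a i (X i \ {e}) ≤ redCost n a i (X j)) ↔
    (∃ I : Fin n → Fin 3, ∀ k : Fin 3,
        ∑ j ∈ Finset.univ.filter (fun j => I j = k), a j = S) := by
  constructor
  · rintro ⟨X, ⟨hdisj, hcover⟩, hefx⟩
    classical
    rcases Nat.eq_zero_or_pos n with hn | hn
    · subst hn
      refine ⟨fun j => j.elim0, fun k => ?_⟩
      have hS0 : 3 * S = 0 := by rw [← hsum]; simp
      have : (Finset.univ : Finset (Fin 0)) = ∅ := by simp
      rw [Finset.filter_congr_decidable]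
      simp [this]
      omega
    · have hS : 0 < S := lt_of_le_of_lt (Nat.zero_le _) (hlt ⟨0, hn⟩)
      have huniq : ∀ (e : Fin n ⊕ Fin 3) (i j : Fin 3), e ∈ X i → e ∈ X j → i = j := by
        intro e i j h1 h2; by_contra hne
        exact (Finset.disjoint_left.mp (hdisj i j hne)) h1 h2
      choose o hX using fun p : Fin 3 => hcover (Sum.inr p)
      choose I hIdef using fun j : Fin n => hcover (Sum.inl j)
      have hIX : ∀ (j : Fin n) (k : Fin 3), Sum.inl j ∈ X k ↔ I j = k :=
        fun j k => ⟨fun h => huniq _ _ _ (hIdef j) h, fun h => h ▸ hIdef j⟩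
      set T : Fin 3 → ℕ := fun k => ∑ j ∈ Finset.univ.filter (fun j => I j = k), a j with hT
      have hfilt : ∀ k, Finset.univ.filter (fun j => Sum.inl j ∈ X k)
          = Finset.univ.filter (fun j => I j = k) := by
        intro k; ext j; simp [hIX]
      have hT3 : T 0 + T 1 + T 2 = 3 * S := by
        have h := Finset.sum_fiberwise Finset.univ I a
        rw [Fin.sum_univ_three] at h
        rw [hT]
        simp only []
        rw [h, hsum]
      have Lcard : ∀ z : Fin 3,
          (∀ j1 j2 : Fin n, Sum.inl j1 ∈ X z → Sum.inl j2 ∈ X z → j1 = j2) → T z < S := by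
        intro z hle
        rcases Finset.eq_empty_or_nonempty
          (Finset.univ.filter (fun j => I j = z)) with hemp | ⟨j, hj⟩
        · have : T z = 0 := by rw [hT]; simp only []; rw [hemp, Finset.sum_empty]
          omega
        · have hjz : Sum.inl j ∈ X z :=
            (hIX j z).mpr (Finset.mem_filter.mp hj).2
          have hsub : Finset.univ.filter (fun j' => I j' = z) ⊆ {j} := by
            intro j' hj'
            exact Finset.mem_singleton.mpr
              (hle j' j ((hIX j' z).mpr (Finset.mem_filter.mp hj').2) hjz)
          have : T z ≤ a j := by
            rw [hT]; simp only []
            calc _ ≤ ∑ j' ∈ ({j} : Finset (Fin n)), a j' := Finset.sum_le_sum_of_subset hsub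
              _ = a j := Finset.sum_singleton _ _
          exact lt_of_le_of_lt this (hlt j)
      have hinj : ∀ p q : Fin 3, p ≠ q → o p ≠ o q := by
        intro p q hpq heq
        have hpX : Sum.inr p ∈ X (o p) := hX p
        have hqX : Sum.inr q ∈ X (o p) := by have h' := hX q; rwa [← heq] at h'
        by_cases hA : ∃ j : Fin n, Sum.inl j ∈ X (o p)
        · obtain ⟨j, hj⟩ := hA
          by_cases hip : o p = p
          · refine Ltop hdisj hefx hpX hqX (Or.inr ⟨Finset.mem_sdiff.mpr
              ⟨by rw [hip]; have h2 := hpX; rwa [hip] at h2, ?_⟩,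
              j, Finset.mem_sdiff.mpr ⟨hj, by simp⟩⟩)
            simp only [Finset.mem_singleton, Sum.inr.injEq]
            rw [hip]; exact hpq
          · by_cases hiq : o p = q
            · refine Ltop hdisj hefx hqX hpX (Or.inr ⟨Finset.mem_sdiff.mpr
                ⟨by rw [hiq]; have h2 := hqX; rwa [hiq] at h2, ?_⟩, j,
                Finset.mem_sdiff.mpr ⟨hj, by simp⟩⟩)
              simp only [Finset.mem_singleton, Sum.inr.injEq]
              rw [hiq]; exact fun h => hpq h.symm
            · refine Ltop hdisj hefx hpX hj (Or.inl ?_)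
              intro r hr
              rcases fin3_two (o p) p q r hpq hip hiq hr with rfl | rfl
              · exact Finset.mem_sdiff.mpr ⟨hpX, by simp⟩
              · exact Finset.mem_sdiff.mpr ⟨hqX, by simp⟩
        · push_neg at hA
          have hTi : T (o p) = 0 := by
            have hemp : Finset.univ.filter (fun j => I j = o p) = ∅ := by
              rw [Finset.filter_eq_empty_iff]
              intro x _ hx
              exact hA x ((hIX x _).mpr hx)
            rw [hT]; simp only []; rw [hemp, Finset.sum_empty]
          obtain ⟨m, hmp, hmq, hmall⟩ := fin3_third p q hpq
          by_cases hwi : o m = o p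
          · have hiX : Sum.inr (o p) ∈ X (o p) := by
              rcases hmall (o p) with h | h | h
              · rw [h] at hpX ⊢; exact hpX
              · rw [h] at hqX ⊢; exact hqX
              · have h' := hX m; rw [hwi] at h'; rw [h] at h' ⊢; exact h'
            refine Ltop hdisj hefx hpX hiX (Or.inl ?_)
            intro r hr
            have hrm : Sum.inr r ∈ X (o p) := by
              rcases hmall r with h | h | h
              · rw [h]; exact hpX
              · rw [h]; exact hqX
              · rw [h]; have h' := hX m; rwa [hwi] at h'
            exact Finset.mem_sdiff.mpr ⟨hrm, by simpa using hr⟩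
          · have hmX : Sum.inr m ∈ X (o m) := hX m
            obtain ⟨z, hzi, hzw, hzall⟩ := fin3_third (o p) (o m) (Ne.symm hwi)
            have hbz : ∀ r : Fin 3, Sum.inr r ∉ X z := by
              intro r hr
              have hor : o r = z := huniq _ _ _ (hX r) hr
              rcases hmall r with rfl | rfl | rfl
              · exact hzi (hor.symm)
              · rw [← heq] at hor; exact hzi (hor.symm)
              · exact hzw (hor.symm)
            have hbw : ∀ r : Fin 3, Sum.inr r ∈ X (o m) → r = m := by
              intro r hr
              have hor : o r = o m := huniq _ _ _ (hX r) hr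
              rcases hmall r with rfl | rfl | rfl
              · exact absurd hor.symm hwi
              · rw [← heq] at hor; exact absurd hor.symm hwi
              · rfl
            have hbi : ∀ r : Fin 3, Sum.inr r ∈ X (o p) → r = p ∨ r = q := by
              intro r hr
              have hor : o r = o p := huniq _ _ _ (hX r) hr
              rcases hmall r with rfl | rfl | rfl
              · exact Or.inl rfl
              · exact Or.inr rfl
              · exact absurd hor hwi
            by_cases hmw : m = o m
            · -- agent (o m) holds its own chore b_m
              have hlew : ∀ j1 j2 : Fin n, Sum.inl j1 ∈ X (o m) → Sum.inl j2 ∈ X (o m) → j1 = j2 := by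
                intro j1 j2 hm1 hm2
                by_contra hne
                refine Ltop hdisj hefx hmX hm2 (Or.inr ⟨Finset.mem_sdiff.mpr ⟨?_, by simp⟩,
                  j1, Finset.mem_sdiff.mpr ⟨hm1, by simp [hne]⟩⟩)
                have h2 := hmX
                rw [← hmw] at h2 ⊢
                exact h2
              have hTw : T (o m) < S := Lcard (o m) hlew
              have hlez : ∀ j1 j2 : Fin n, Sum.inl j1 ∈ X z → Sum.inl j2 ∈ X z → j1 = j2 := by
                intro j1 j2 hz1 hz2
                by_contra hne
                have h := hefx z (o p) (Sum.inl j1) hz1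
                have hL : ¬ RC z (X z \ {Sum.inl j1}) :=
                  not_RC ⟨z + 1, (fadd z).1, fun hm => hbz _ (Finset.mem_sdiff.mp hm).1⟩
                    (fun hm => absurd (Finset.mem_sdiff.mp hm).1 (hbz z))
                have hR : ¬ RC z (X (o p)) := by
                  refine not_RC ⟨m, ?_, fun hm => ?_⟩ (fun _ j' hj' => hA j' hj')
                  · rw [hmw]; exact fun h => hzw h.symm
                  · rcases hbi m hm with h | h
                    exacts [hmp h, hmq h]
                rw [redCost_eq_sum a hL, redCost_eq_sum a hR, Nat.cast_le] at h
                have e2 : Finset.univ.filter (fun j' => Sum.inl j' ∈ X (o p)) = ∅ := by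
                  rw [Finset.filter_eq_empty_iff]; intro x _ hx; exact hA x hx
                rw [e2, Finset.sum_empty] at h
                have hmem2 : j2 ∈ Finset.univ.filter (fun j' => Sum.inl j' ∈ X z \ {Sum.inl j1}) := by
                  refine Finset.mem_filter.mpr ⟨Finset.mem_univ _, Finset.mem_sdiff.mpr ⟨hz2, ?_⟩⟩
                  simp [Ne.symm hne]
                have := Finset.single_le_sum (f := a) (fun _ _ => Nat.zero_le _) hmem2
                have := hpos j2
                omega
              have hTz : T z < S := Lcard z hlez
              have hsum3 : T 0 + T 1 + T 2 = T (o p) + T (o m) + T z :=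
                f3sum T (o p) (o m) z (fun h => hwi h.symm) (fun h => hzi h.symm)
                  (fun h => hzw h.symm)
              omega
            · -- m ≠ o m
              have hTw0 : T (o m) = 0 := by
                have h := hefx (o m) (o p) (Sum.inr m) hmX
                have hno : ∀ r : Fin 3, Sum.inr r ∉ X (o m) \ {Sum.inr m} := by
                  intro r hm
                  exact (Finset.mem_sdiff.mp hm).2
                    (by rw [hbw r (Finset.mem_sdiff.mp hm).1]; exact Finset.mem_singleton_self _)
                have hL : ¬ RC (o m) (X (o m) \ {Sum.inr m}) :=
                  not_RC ⟨o m + 1, (fadd (o m)).1, hno _⟩ (fun hm => absurd hm (hno (o m)))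
                have hR : ¬ RC (o m) (X (o p)) := by
                  refine not_RC ⟨m, hmw, fun hm => ?_⟩ (fun _ j' hj' => hA j' hj')
                  rcases hbi m hm with h | h
                  exacts [hmp h, hmq h]
                rw [redCost_eq_sum a hL, redCost_eq_sum a hR, Nat.cast_le] at h
                have e1 : Finset.univ.filter (fun j => Sum.inl j ∈ X (o m) \ {Sum.inr m})
                    = Finset.univ.filter (fun j => I j = o m) := by
                  ext j'; simp [Finset.mem_sdiff, hIX]
                have e2 : Finset.univ.filter (fun j' => Sum.inl j' ∈ X (o p)) = ∅ := by
                  rw [Finset.filter_eq_empty_iff]; intro x _ hx; exact hA x hx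
                rw [e1, e2, Finset.sum_empty] at h
                have : T (o m) ≤ 0 := by rw [hT]; simp only []; exact h
                omega
              have hsum3 : T 0 + T 1 + T 2 = T (o p) + T (o m) + T z :=
                f3sum T (o p) (o m) z (fun h => hwi h.symm) (fun h => hzi h.symm)
                  (fun h => hzw h.symm)
              have hTz : T z = 3 * S := by omega
              have hAw : ∀ j' : Fin n, Sum.inl j' ∉ X (o m) := by
                intro j' hj'
                have hmem' : j' ∈ Finset.univ.filter (fun j => I j = o m) :=
                  Finset.mem_filter.mpr ⟨Finset.mem_univ _, (hIX j' (o m)).mp hj'⟩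
                have h1 : a j' ≤ T (o m) := by
                  rw [hT]; simp only []
                  exact Finset.single_le_sum (f := a) (fun _ _ => Nat.zero_le _) hmem'
                have := hpos j'
                omega
              have hnezf : (Finset.univ.filter (fun j => I j = z)).Nonempty := by
                rcases Finset.eq_empty_or_nonempty (Finset.univ.filter (fun j => I j = z)) with
                  hemp | hne
                · exfalso
                  have : T z = 0 := by rw [hT]; simp only []; rw [hemp, Finset.sum_empty]
                  omega
                · exact hne
              obtain ⟨j, hj⟩ := hnezf
              have hjz : Sum.inl j ∈ X z := (hIX j z).mpr (Finset.mem_filter.mp hj).2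
              have h := hefx z (o m) (Sum.inl j) hjz
              have hL : ¬ RC z (X z \ {Sum.inl j}) :=
                not_RC ⟨z + 1, (fadd z).1, fun hm => hbz _ (Finset.mem_sdiff.mp hm).1⟩
                  (fun hm => absurd (Finset.mem_sdiff.mp hm).1 (hbz z))
              have hR : ¬ RC z (X (o m)) := by
                obtain ⟨r, hrz, hrm⟩ := fin3_pair z m
                exact not_RC ⟨r, hrz, fun hm => hrm (hbw r hm)⟩ (fun _ j' hj' => hAw j' hj')
              rw [redCost_eq_sum a hL, redCost_eq_sum a hR, Nat.cast_le] at h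
              have e2 : Finset.univ.filter (fun j' => Sum.inl j' ∈ X (o m)) = ∅ := by
                rw [Finset.filter_eq_empty_iff]; intro x _ hx; exact hAw x hx
              rw [e2, Finset.sum_empty] at h
              have hsubz : Finset.univ.filter (fun j' => I j' = z) ⊆ {j} := by
                intro j' hj'
                by_contra hne'
                have hj'ne : j' ≠ j := by simpa using hne'
                have hmem' : j' ∈ Finset.univ.filter
                    (fun j'' => Sum.inl j'' ∈ X z \ {Sum.inl j}) := by
                  refine Finset.mem_filter.mpr ⟨Finset.mem_univ _, Finset.mem_sdiff.mpr
                    ⟨(hIX j' z).mpr (Finset.mem_filter.mp hj').2, by simp [hj'ne]⟩⟩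
                have := Finset.single_le_sum (f := a) (fun _ _ => Nat.zero_le _) hmem'
                have := hpos j'
                omega
              have hTza : T z ≤ a j := by
                rw [hT]; simp only []
                calc _ ≤ ∑ j' ∈ ({j} : Finset (Fin n)), a j' := Finset.sum_le_sum_of_subset hsubz
                  _ = a j := Finset.sum_singleton _ _
              have := hlt j
              omega
      have Lsmall : ∀ f : Fin 3, o f = f → T f < S := by
        intro f hf
        have hfX : Sum.inr f ∈ X f := by have h' := hX f; rwa [hf] at h'
        refine Lcard f ?_
        intro j1 j2 h1 h2
        by_contra hne
        refine Ltop hdisj hefx hfX h2 (Or.inr ⟨?_, j1, ?_⟩)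
        · exact Finset.mem_sdiff.mpr ⟨hfX, by simp⟩
        · exact Finset.mem_sdiff.mpr ⟨h1, by simp [hne]⟩
      have L1 : ∀ i p w : Fin 3, o p = i → o i ≠ w → (∃ r, r ≠ i ∧ o r ≠ w) → T i ≤ T w := by
        intro i p w hop hoi ⟨r, hri, hrw⟩
        have hpX : Sum.inr p ∈ X i := by have h' := hX p; rwa [hop] at h'
        have hnoB : ∀ q : Fin 3, Sum.inr q ∈ X i → q = p := by
          intro q hq
          have hq' : o q = i := huniq _ _ _ (hX q) hq
          by_contra hne
          exact hinj q p hne (hq'.trans hop.symm)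
        have hnoB' : ∀ q : Fin 3, Sum.inr q ∉ X i \ {Sum.inr p} := by
          intro q hm
          exact (Finset.mem_sdiff.mp hm).2
            (by rw [hnoB q (Finset.mem_sdiff.mp hm).1]; exact Finset.mem_singleton_self _)
        have hL : ¬ RC i (X i \ {Sum.inr p}) :=
          not_RC ⟨i + 1, (fadd i).1, hnoB' _⟩ (fun hm => absurd hm (hnoB' i))
        have hR : ¬ RC i (X w) :=
          not_RC ⟨r, hri, fun hm => hrw (huniq _ _ _ (hX r) hm)⟩
            (fun hm => absurd (huniq _ _ _ (hX i) hm) hoi)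
        have h := hefx i w _ hpX
        rw [redCost_eq_sum a hL, redCost_eq_sum a hR, Nat.cast_le] at h
        have e1 : Finset.univ.filter (fun j => Sum.inl j ∈ X i \ {Sum.inr p})
            = Finset.univ.filter (fun j => I j = i) := by
          ext j; simp [Finset.mem_sdiff, hIX]
        rw [e1, hfilt w] at h
        exact h
      have tri : ∀ x : Fin 3, x = 0 ∨ x = 1 ∨ x = 2 := by decide
      have goal : T 0 = S ∧ T 1 = S ∧ T 2 = S := by
        rcases tri (o 0) with h0 | h0 | h0 <;> rcases tri (o 1) with h1 | h1 | h1 <;>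
          rcases tri (o 2) with h2 | h2 | h2 <;>
          [skip; skip; skip; skip; skip; skip; skip; skip; skip; skip; skip; skip; skip;
           skip; skip; skip; skip; skip; skip; skip; skip; skip; skip; skip; skip; skip; skip]
        all_goals try exact absurd (h0.trans h1.symm) (hinj 0 1 (by decide))
        all_goals try exact absurd (h0.trans h2.symm) (hinj 0 2 (by decide))
        all_goals try exact absurd (h1.trans h2.symm) (hinj 1 2 (by decide))
        -- remaining 6 cases in order:
        -- (0,1,2)
        · have := Lsmall 0 h0; have := Lsmall 1 h1; have := Lsmall 2 h2; omega
        -- (0,2,1)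
        · have := Lsmall 0 h0
          have b1 : T 1 ≤ T 0 := L1 1 2 0 h2 (by rw [h1]; decide) ⟨2, by decide, by rw [h2]; decide⟩
          have b2 : T 2 ≤ T 0 := L1 2 1 0 h1 (by rw [h2]; decide) ⟨1, by decide, by rw [h1]; decide⟩
          omega
        -- (1,0,2)
        · have := Lsmall 2 h2
          have b1 : T 0 ≤ T 2 := L1 0 1 2 h1 (by rw [h0]; decide) ⟨1, by decide, by rw [h1]; decide⟩
          have b2 : T 1 ≤ T 2 := L1 1 0 2 h0 (by rw [h1]; decide) ⟨0, by decide, by rw [h0]; decide⟩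
          omega
        -- (1,2,0)
        · have b1 : T 0 ≤ T 2 := L1 0 2 2 h2 (by rw [h0]; decide) ⟨2, by decide, by rw [h2]; decide⟩
          have b2 : T 1 ≤ T 0 := L1 1 0 0 h0 (by rw [h1]; decide) ⟨0, by decide, by rw [h0]; decide⟩
          have b3 : T 2 ≤ T 1 := L1 2 1 1 h1 (by rw [h2]; decide) ⟨1, by decide, by rw [h1]; decide⟩
          omega
        -- (2,0,1)
        · have b1 : T 0 ≤ T 1 := L1 0 1 1 h1 (by rw [h0]; decide) ⟨1, by decide, by rw [h1]; decide⟩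
          have b2 : T 1 ≤ T 2 := L1 1 2 2 h2 (by rw [h1]; decide) ⟨2, by decide, by rw [h2]; decide⟩
          have b3 : T 2 ≤ T 0 := L1 2 0 0 h0 (by rw [h2]; decide) ⟨0, by decide, by rw [h0]; decide⟩
          omega
        -- (2,1,0)
        · have := Lsmall 1 h1
          have b1 : T 0 ≤ T 1 := L1 0 2 1 h2 (by rw [h0]; decide) ⟨2, by decide, by rw [h2]; decide⟩
          have b2 : T 2 ≤ T 1 := L1 2 0 1 h0 (by rw [h2]; decide) ⟨0, by decide, by rw [h0]; decide⟩
          omega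
      refine ⟨I, fun k => ?_⟩
      rcases tri k with rfl | rfl | rfl
      exacts [goal.1, goal.2.1, goal.2.2]

  · rintro ⟨I, hI⟩
    classical
    set Y : Fin 3 → Finset (Fin n ⊕ Fin 3) :=
      fun k => insert (Sum.inr (k + 1))
        ((Finset.univ.filter (fun j => I j = k)).image Sum.inl) with hY
    have hmeml : ∀ (j : Fin n) (k : Fin 3), Sum.inl j ∈ Y k ↔ I j = k := by
      intro j k; simp [hY]
    have hmemr : ∀ (r : Fin 3) (k : Fin 3), Sum.inr r ∈ Y k ↔ r = k + 1 := by
      intro r k; simp [hY]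
    refine ⟨Y, ⟨?_, ?_⟩, ?_⟩
    · intro i j hne
      rw [Finset.disjoint_left]
      intro e hei hej
      match e with
      | Sum.inl j' =>
          exact hne (((hmeml j' i).mp hei).symm.trans ((hmeml j' j).mp hej))
      | Sum.inr r =>
          have h1 := (hmemr r i).mp hei
          have h2 := (hmemr r j).mp hej
          exact hne (add_right_cancel ((h1.symm.trans h2)))
    · intro e
      match e with
      | Sum.inl j => exact ⟨I j, (hmeml j (I j)).mpr rfl⟩
      | Sum.inr r =>
          refine ⟨r + 2, (hmemr r (r + 2)).mpr ?_⟩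
          revert r; decide
    · intro i j e he
      have hL : ¬ RC i (Y i \ {e}) := by
        refine not_RC ⟨i + 2, (fadd i).2.1, fun hm => ?_⟩ (fun hm => ?_)
        · have := (hmemr (i + 2) i).mp (Finset.mem_sdiff.mp hm).1
          exact absurd this (Ne.symm (fadd i).2.2)
        · have := (hmemr i i).mp (Finset.mem_sdiff.mp hm).1
          exact absurd this (Ne.symm (fadd i).1)
      rw [redCost_eq_sum a hL]
      have hsub : Finset.univ.filter (fun j' => Sum.inl j' ∈ Y i \ {e})
          ⊆ Finset.univ.filter (fun j' => I j' = i) := by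
        intro j' hj'
        simp only [Finset.mem_filter, Finset.mem_univ, true_and, Finset.mem_sdiff] at hj' ⊢
        exact (hmeml j' i).mp hj'.1
      have hLS : (∑ j' ∈ Finset.univ.filter (fun j' => Sum.inl j' ∈ Y i \ {e}), a j') ≤ S := by
        calc _ ≤ ∑ j' ∈ Finset.univ.filter (fun j' => I j' = i), a j' :=
              Finset.sum_le_sum_of_subset hsub
          _ = S := hI i
      by_cases hc : RC i (Y j)
      · rw [redCost_eq_top a hc]; exact le_top
      · rw [redCost_eq_sum a hc, Nat.cast_le]
        have : Finset.univ.filter (fun j' => Sum.inl j' ∈ Y j)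
            = Finset.univ.filter (fun j' => I j' = j) := by
          ext j'; simp [hmeml]
        rw [this, hI j]
        exact hLS
end

section
/- For any chore-division instance with n agents, m chores, and normalized monotone cost functions, if m ≤ n + 2 then an EFX allocation exists. -/
section helpers
variable {n : ℕ} {M : Type*} [Fintype M] [DecidableEq M]

/-- allocation from an assignment function -/
lemma alloc_of_fun (f : M → Fin n) :
    IsAllocation (fun i => Finset.univ.filter (fun e => f e = i)) := by
  constructor
  · intro i j hij
    rw [Finset.disjoint_left]
    intro a ha hb
    simp only [Finset.mem_filter] at ha hb
    exact hij (ha.2 ▸ hb.2)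
  · intro e
    exact ⟨f e, by simp⟩

lemma helper_small (hm : Fintype.card M ≤ n) (c : Fin n → Finset M → ℝ)
    (hnonneg : ∀ i S, 0 ≤ c i S) (hnorm : ∀ i, c i ∅ = 0) :
    ∃ X : Fin n → Finset M, IsAllocation X ∧
      ∀ i j : Fin n, ∀ e ∈ X i, c i (X i \ {e}) ≤ c i (X j) := by
  obtain ⟨g⟩ : Nonempty (M ↪ Fin n) :=
    Function.Embedding.nonempty_iff_card_le.mpr (by simpa using hm)
  refine ⟨fun i => Finset.univ.filter (fun e => g e = i), alloc_of_fun _, ?_⟩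
  intro i j e he
  have h : (Finset.univ.filter (fun e => g e = i)) \ {e} = ∅ := by
    ext x
    simp only [Finset.mem_sdiff, Finset.mem_filter, Finset.mem_univ, true_and,
      Finset.mem_singleton, Finset.notMem_empty, iff_false, not_and]
    intro hx
    simp only [Finset.mem_filter, Finset.mem_univ, true_and] at he
    simp [g.injective (hx.trans he.symm)]
  simp only [h, hnorm]
  exact hnonneg _ _

lemma helper_one [NeZero n] (c : Fin n → Finset M → ℝ)
    (hnonneg : ∀ i S, 0 ≤ c i S) (hnorm : ∀ i, c i ∅ = 0)
    (hmono : ∀ i, ∀ S T : Finset M, S ⊆ T → c i S ≤ c i T)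
    (A : Finset M) (hcard : Aᶜ.card = n - 1)
    (hA : ∀ e ∈ A, ∀ z ∉ A, c 0 (A \ {e}) ≤ c 0 {z}) :
    ∃ X : Fin n → Finset M, IsAllocation X ∧
      ∀ i j : Fin n, ∀ e ∈ X i, c i (X i \ {e}) ≤ c i (X j) := by
  have hn : 1 ≤ n := Nat.one_le_iff_ne_zero.mpr (NeZero.ne n)
  have tcard : ({(0 : Fin n)}ᶜ : Finset (Fin n)).card = n - 1 := by
    rw [Finset.card_compl]; simp
  set φ : {x // x ∈ Aᶜ} ≃ {x // x ∈ ({(0 : Fin n)}ᶜ : Finset (Fin n))} :=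
    Finset.equivOfCardEq (hcard.trans tcard.symm) with hφ
  set f : M → Fin n := fun e => if h : e ∈ Aᶜ then (φ ⟨e, h⟩ : Fin n) else 0 with hf
  have key1 : Finset.univ.filter (fun e => f e = 0) = A := by
    ext e
    simp only [Finset.mem_filter, Finset.mem_univ, true_and, hf]
    split_ifs with h
    · have := (φ ⟨e, h⟩).2
      simp only [Finset.mem_compl, Finset.mem_singleton] at this h
      simp [this, h]
    · simp only [Finset.mem_compl, not_not] at h
      simp [h]
  have key2 : ∀ j : Fin n, j ≠ 0 → ∃ z, z ∉ A ∧
      Finset.univ.filter (fun e => f e = j) = {z} := by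
    intro j hj
    have hjm : j ∈ ({(0 : Fin n)}ᶜ : Finset (Fin n)) := by simpa using hj
    refine ⟨(φ.symm ⟨j, hjm⟩ : M), Finset.mem_compl.mp (φ.symm ⟨j, hjm⟩).2, ?_⟩
    ext e
    simp only [Finset.mem_filter, Finset.mem_univ, true_and, Finset.mem_singleton, hf]
    split_ifs with h
    · constructor
      · intro he
        have : φ ⟨e, h⟩ = ⟨j, hjm⟩ := Subtype.ext he
        have := congrArg (fun x => (φ.symm x : M)) this
        simpa using this
      · intro he
        have : (⟨e, h⟩ : {x // x ∈ Aᶜ}) = φ.symm ⟨j, hjm⟩ := Subtype.ext he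
        rw [this]; simp
    · constructor
      · intro he; exact absurd he.symm hj
      · intro he
        exfalso; apply h
        rw [he]
        exact (φ.symm ⟨j, hjm⟩).2
  refine ⟨fun i => Finset.univ.filter (fun e => f e = i), alloc_of_fun _, ?_⟩
  intro i j e he
  dsimp only at he ⊢
  by_cases hi : i = 0
  · subst hi
    rw [key1] at he ⊢
    by_cases hj : j = 0
    · subst hj; rw [key1]
      exact hmono 0 _ _ (Finset.sdiff_subset)
    · obtain ⟨z, hz, hXj⟩ := key2 j hj
      rw [hXj]
      exact hA e he z hz
  · obtain ⟨z, hz, hXi⟩ := key2 i hi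
    rw [hXi] at he ⊢
    simp only [Finset.mem_singleton] at he
    subst he
    rw [Finset.sdiff_self]
    simp only [hnorm]
    exact hnonneg _ _

lemma helper_two (hn2 : 2 ≤ n) [NeZero n] (c : Fin n → Finset M → ℝ)
    (hnonneg : ∀ i S, 0 ≤ c i S) (hnorm : ∀ i, c i ∅ = 0)
    (hmono : ∀ i, ∀ S T : Finset M, S ⊆ T → c i S ≤ c i T)
    (A B : Finset M) (hdisj : Disjoint A B)
    (hcard : ((A ∪ B)ᶜ).card = n - 2)
    (hA : ∀ e ∈ A, c 0 (A \ {e}) ≤ c 0 B ∧ ∀ z ∉ A ∪ B, c 0 (A \ {e}) ≤ c 0 {z})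
    (hB : ∀ e ∈ B, c 1 (B \ {e}) ≤ c 1 A ∧ ∀ z ∉ A ∪ B, c 1 (B \ {e}) ≤ c 1 {z}) :
    ∃ X : Fin n → Finset M, IsAllocation X ∧
      ∀ i j : Fin n, ∀ e ∈ X i, c i (X i \ {e}) ≤ c i (X j) := by
  have h01 : (0 : Fin n) ≠ 1 := by
    obtain ⟨k, rfl⟩ : ∃ k, n = k + 2 := ⟨n - 2, by omega⟩
    exact zero_ne_one
  have tcard : (({0, 1} : Finset (Fin n))ᶜ).card = n - 2 := by
    rw [Finset.card_compl, Finset.card_insert_of_notMem (by simp [h01]),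
      Finset.card_singleton, Fintype.card_fin]
  set φ : {x // x ∈ (A ∪ B)ᶜ} ≃ {x // x ∈ (({0, 1} : Finset (Fin n))ᶜ)} :=
    Finset.equivOfCardEq (hcard.trans tcard.symm) with hφ
  set f : M → Fin n := fun e =>
    if h : e ∈ (A ∪ B)ᶜ then (φ ⟨e, h⟩ : Fin n) else if e ∈ A then 0 else 1 with hf
  have hphi_ne : ∀ (e : M) (h : e ∈ (A ∪ B)ᶜ), (φ ⟨e, h⟩ : Fin n) ≠ 0 ∧ (φ ⟨e, h⟩ : Fin n) ≠ 1 := by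
    intro e h
    have := (φ ⟨e, h⟩).2
    simp only [Finset.mem_compl, Finset.mem_insert, Finset.mem_singleton, not_or] at this
    exact this
  have key0 : Finset.univ.filter (fun e => f e = 0) = A := by
    ext e
    simp only [Finset.mem_filter, Finset.mem_univ, true_and, hf]
    split_ifs with h h2
    · simp only [Finset.mem_compl, Finset.mem_union, not_or] at h
      simp [(hphi_ne e _).1, h.1]
    · simp [h2]
    · simp only [Finset.mem_compl, Finset.mem_union, not_or, not_and, not_not] at h
      simp [Ne.symm h01, h2]
  have key1 : Finset.univ.filter (fun e => f e = 1) = B := by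
    ext e
    simp only [Finset.mem_filter, Finset.mem_univ, true_and, hf]
    split_ifs with h h2
    · simp only [Finset.mem_compl, Finset.mem_union, not_or] at h
      simp [(hphi_ne e _).2, h.2]
    · have : e ∉ B := Finset.disjoint_left.mp hdisj h2
      simp [h01, this]
    · simp only [Finset.mem_compl, Finset.mem_union, not_or, not_not] at h
      have : e ∈ B := by tauto
      simp [this]
  have key2 : ∀ j : Fin n, j ≠ 0 → j ≠ 1 → ∃ z, z ∉ A ∪ B ∧
      Finset.univ.filter (fun e => f e = j) = {z} := by
    intro j hj0 hj1
    have hjm : j ∈ (({0, 1} : Finset (Fin n))ᶜ) := by simp [hj0, hj1]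
    refine ⟨(φ.symm ⟨j, hjm⟩ : M), Finset.mem_compl.mp (φ.symm ⟨j, hjm⟩).2, ?_⟩
    ext e
    simp only [Finset.mem_filter, Finset.mem_univ, true_and, Finset.mem_singleton, hf]
    split_ifs with h h2
    · constructor
      · intro he
        have : φ ⟨e, h⟩ = ⟨j, hjm⟩ := Subtype.ext he
        have := congrArg (fun x => (φ.symm x : M)) this
        simpa using this
      · intro he
        have : (⟨e, h⟩ : {x // x ∈ (A ∪ B)ᶜ}) = φ.symm ⟨j, hjm⟩ := Subtype.ext he
        rw [this]; simp
    · constructor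
      · intro he; exact absurd he.symm hj0
      · intro he
        exfalso; apply h; rw [he]
        exact (φ.symm ⟨j, hjm⟩).2
    · constructor
      · intro he; exact absurd he.symm hj1
      · intro he
        exfalso; apply h; rw [he]
        exact (φ.symm ⟨j, hjm⟩).2
  refine ⟨fun i => Finset.univ.filter (fun e => f e = i), alloc_of_fun _, ?_⟩
  intro i j e he
  dsimp only at he ⊢
  by_cases hi0 : i = 0
  · subst hi0
    rw [key0] at he ⊢
    by_cases hj0 : j = 0
    · subst hj0; rw [key0]
      exact hmono 0 _ _ Finset.sdiff_subset
    by_cases hj1 : j = 1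
    · subst hj1; rw [key1]
      exact (hA e he).1
    · obtain ⟨z, hz, hXj⟩ := key2 j hj0 hj1
      rw [hXj]
      exact (hA e he).2 z hz
  by_cases hi1 : i = 1
  · subst hi1
    rw [key1] at he ⊢
    by_cases hj0 : j = 0
    · subst hj0; rw [key0]
      exact (hB e he).1
    by_cases hj1 : j = 1
    · subst hj1; rw [key1]
      exact hmono 1 _ _ Finset.sdiff_subset
    · obtain ⟨z, hz, hXj⟩ := key2 j hj0 hj1
      rw [hXj]
      exact (hB e he).2 z hz
  · obtain ⟨z, hz, hXi⟩ := key2 i hi0 hi1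
    rw [hXi] at he ⊢
    simp only [Finset.mem_singleton] at he
    subst he
    rw [Finset.sdiff_self]
    simp only [hnorm]
    exact hnonneg _ _

lemma pair_sdiff_left {M : Type*} [DecidableEq M] {x y : M} (h : x ≠ y) :
    ({x, y} : Finset M) \ {x} = {y} := by
  ext a
  simp only [Finset.mem_sdiff, Finset.mem_insert, Finset.mem_singleton]
  aesop

lemma pair_sdiff_right {M : Type*} [DecidableEq M] {x y : M} (h : x ≠ y) :
    ({x, y} : Finset M) \ {y} = {x} := by
  ext a
  simp only [Finset.mem_sdiff, Finset.mem_insert, Finset.mem_singleton]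
  aesop

lemma triple_sdiff_1 {M : Type*} [DecidableEq M] {x y z : M} (hxy : x ≠ y) (hxz : x ≠ z) :
    ({x, y, z} : Finset M) \ {x} = {y, z} := by
  ext a
  simp only [Finset.mem_sdiff, Finset.mem_insert, Finset.mem_singleton]
  aesop

lemma triple_sdiff_2 {M : Type*} [DecidableEq M] {x y z : M} (hxy : x ≠ y) (hyz : y ≠ z) :
    ({x, y, z} : Finset M) \ {y} = {x, z} := by
  ext a
  simp only [Finset.mem_sdiff, Finset.mem_insert, Finset.mem_singleton]
  aesop

lemma triple_sdiff_3 {M : Type*} [DecidableEq M] {x y z : M} (hxz : x ≠ z) (hyz : y ≠ z) :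
    ({x, y, z} : Finset M) \ {z} = {x, y} := by
  ext a
  simp only [Finset.mem_sdiff, Finset.mem_insert, Finset.mem_singleton]
  aesop

end helpers


/-- For any number of agents with general (normalized, monotone) cost functions,
an EFX allocation exists whenever there are at most `n + 2` chores. -/
theorem efx_exists_few_chores
    (n : ℕ) (hn : 1 ≤ n) (M : Type*) [Fintype M] [DecidableEq M]
    (hm : Fintype.card M ≤ n + 2)
    (c : Fin n → Finset M → ℝ)
    (hnonneg : ∀ i S, 0 ≤ c i S)
    (hnorm : ∀ i, c i ∅ = 0)
    (hmono : ∀ i, ∀ S T : Finset M, S ⊆ T → c i S ≤ c i T) :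
    ∃ X : Fin n → Finset M, IsAllocation X ∧
      ∀ i j : Fin n, ∀ e ∈ X i, c i (X i \ {e}) ≤ c i (X j) := by
  have : NeZero n := ⟨by omega⟩
  by_cases hn1 : n = 1
  · subst hn1
    refine helper_one c hnonneg hnorm hmono Finset.univ ?_ ?_
    · rw [Finset.compl_univ]; simp
    · intro e _ z hz
      exact absurd (Finset.mem_univ z) hz
  have hn2 : 2 ≤ n := by omega
  by_cases hsm : Fintype.card M ≤ n
  · exact helper_small hsm c hnonneg hnorm
  · have hMne : (Finset.univ : Finset M).Nonempty := by
      rw [← Finset.card_pos, Finset.card_univ]; omega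
    obtain ⟨e1, -, hE1'⟩ := Finset.exists_min_image Finset.univ (fun x => c 0 {x}) hMne
    have hE1 : ∀ x : M, c 0 {e1} ≤ c 0 {x} := fun x => hE1' x (Finset.mem_univ x)
    have h1ne : (({e1} : Finset M)ᶜ).Nonempty := by
      rw [← Finset.card_pos, Finset.card_compl, Finset.card_singleton]; omega
    obtain ⟨e2, he2, hE2'⟩ := Finset.exists_min_image _ (fun x => c 0 {x}) h1ne
    have h12 : e1 ≠ e2 := by
      simp only [Finset.mem_compl, Finset.mem_singleton] at he2
      exact fun h => he2 h.symm
    have hE2 : ∀ x : M, x ≠ e1 → c 0 {e2} ≤ c 0 {x} := fun x hx =>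
      hE2' x (by simpa using hx)
    have hP2 : ({e1, e2} : Finset M).card = 2 := by
      rw [Finset.card_insert_of_notMem (by simpa using h12), Finset.card_singleton]
    rcases show Fintype.card M = n + 1 ∨ Fintype.card M = n + 2 by omega with hm1 | hm2
    · -- case card M = n + 1
      refine helper_one c hnonneg hnorm hmono {e1, e2} ?_ ?_
      · rw [Finset.card_compl, hP2]; omega
      · intro e he z hz
        simp only [Finset.mem_insert, Finset.mem_singleton, not_or] at hz
        rcases Finset.mem_insert.mp he with rfl | he'
        · rw [pair_sdiff_left h12]
          exact hE2 z hz.1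
        · rw [Finset.mem_singleton] at he'
          subst he'
          rw [pair_sdiff_right h12]
          exact hE1 z
    · -- case card M = n + 2
      have hMp_ne : ((({e1, e2} : Finset M))ᶜ).Nonempty := by
        rw [← Finset.card_pos, Finset.card_compl, hP2]; omega
      obtain ⟨b, hb, hbmin⟩ :=
        Finset.exists_min_image (({e1, e2} : Finset M))ᶜ (fun x => c 1 {x}) hMp_ne
      have hbP : b ∉ ({e1, e2} : Finset M) := Finset.mem_compl.mp hb
      have hb1 : b ≠ e1 := fun h => hbP (by simp [h])
      have hb2 : b ≠ e2 := fun h => hbP (by simp [h])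
      have hMpb_ne : (((({e1, e2} : Finset M))ᶜ) \ {b}).Nonempty := by
        rw [← Finset.card_pos, Finset.card_sdiff_of_subset (Finset.singleton_subset_iff.mpr hb),
          Finset.card_compl, hP2, Finset.card_singleton]
        omega
      obtain ⟨s, hs, hsmin⟩ :=
        Finset.exists_min_image _ (fun x => c 1 {x}) hMpb_ne
      rw [Finset.mem_sdiff, Finset.mem_singleton] at hs
      obtain ⟨hsMp, hsb⟩ := hs
      have hsP : s ∉ ({e1, e2} : Finset M) := Finset.mem_compl.mp hsMp
      have hs1 : s ≠ e1 := fun h => hsP (by simp [h])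
      have hs2 : s ≠ e2 := fun h => hsP (by simp [h])
      by_cases hI : c 1 {s} ≤ c 1 ({e1, e2} : Finset M)
      · -- Case I : two pairs {e1,e2} / {b,s}
        have hdisj : Disjoint ({e1, e2} : Finset M) ({b, s} : Finset M) := by
          rw [Finset.disjoint_left]
          intro a ha ha'
          simp only [Finset.mem_insert, Finset.mem_singleton] at ha ha'
          rcases ha with rfl | rfl <;> rcases ha' with rfl | rfl <;>
            first | exact hb1 rfl | exact hb2 rfl | exact hs1 rfl | exact hs2 rfl
        refine helper_two hn2 c hnonneg hnorm hmono {e1, e2} {b, s} hdisj ?_ ?_ ?_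
        · rw [Finset.card_compl, Finset.card_union_of_disjoint hdisj, hP2,
            Finset.card_insert_of_notMem (by simp only [Finset.mem_singleton]; exact Ne.symm hsb),
            Finset.card_singleton]
          omega
        · intro e he
          rcases Finset.mem_insert.mp he with rfl | he'
          · rw [pair_sdiff_left h12]
            constructor
            · exact (hE2 b hb1).trans (hmono 0 {b} {b, s} (by simp))
            · intro z hz
              simp only [Finset.mem_union, Finset.mem_insert, Finset.mem_singleton,
                not_or] at hz
              exact hE2 z hz.1.1
          · rw [Finset.mem_singleton] at he'; subst he'
            rw [pair_sdiff_right h12]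
            constructor
            · exact (hE1 b).trans (hmono 0 {b} {b, s} (by simp))
            · intro z hz
              exact hE1 z
        · intro e he
          have hbs : b ≠ s := fun h => hsb h.symm
          rcases Finset.mem_insert.mp he with rfl | he'
          · rw [pair_sdiff_left hbs]
            refine ⟨hI, ?_⟩
            intro z hz
            simp only [Finset.mem_union, Finset.mem_insert, Finset.mem_singleton,
              not_or] at hz
            refine hsmin z ?_
            rw [Finset.mem_sdiff, Finset.mem_compl, Finset.mem_singleton]
            exact ⟨by simp [hz.1.1, hz.1.2], hz.2.1⟩
          · rw [Finset.mem_singleton] at he'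
            rw [he', pair_sdiff_right hbs]
            constructor
            · exact (hbmin s hsMp).trans hI
            · intro z hz
              simp only [Finset.mem_union, Finset.mem_insert, Finset.mem_singleton,
                not_or] at hz
              exact hbmin z (by simp [hz.1.1, hz.1.2])
      · -- Case II
        push_neg at hI
        have hTc_ne : ((({e1, e2, b} : Finset M))ᶜ).Nonempty := by
          rw [← Finset.card_pos, Finset.card_compl]
          have : ({e1, e2, b} : Finset M).card ≤ 3 :=
            (Finset.card_insert_le _ _).trans (by
              exact Nat.add_le_add_right ((Finset.card_insert_le _ _).trans (by simp)) 1)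
          omega
        obtain ⟨w, hw, hwmin⟩ :=
          Finset.exists_min_image (({e1, e2, b} : Finset M))ᶜ (fun x => c 0 {x}) hTc_ne
        have hwT : w ∉ ({e1, e2, b} : Finset M) := Finset.mem_compl.mp hw
        have hw1 : w ≠ e1 := fun h => hwT (by simp [h])
        have hw2 : w ≠ e2 := fun h => hwT (by simp [h])
        have hwb : w ≠ b := fun h => hwT (by simp [h])
        have hW : ∀ z : M, z ≠ e1 → z ≠ e2 → z ≠ b → c 0 {w} ≤ c 0 {z} := by
          intro z hz1 hz2 hzb
          exact hwmin z (by simp [hz1, hz2, hzb])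
        have hT3 : ∀ z : M, z ≠ e1 → z ≠ e2 → z ≠ b → ∀ t ∈ ({e1, e2, b} : Finset M),
            c 1 {t} ≤ c 1 {z} := by
          intro z hz1 hz2 hzb t ht
          have hzMp : z ∈ (({e1, e2} : Finset M))ᶜ := by simp [hz1, hz2]
          have hz2' : c 1 {s} ≤ c 1 {z} := hsmin z (by
            rw [Finset.mem_sdiff, Finset.mem_singleton]; exact ⟨hzMp, hzb⟩)
          simp only [Finset.mem_insert, Finset.mem_singleton] at ht
          rcases ht with h | h | h
          · rw [h]
            exact ((hmono 1 {e1} {e1, e2} (by simp)).trans hI.le).trans hz2'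
          · rw [h]
            exact ((hmono 1 {e2} {e1, e2} (by simp)).trans hI.le).trans hz2'
          · rw [h]
            exact hbmin z hzMp
        by_cases h1 : c 0 {w} ≤ c 0 ({e2, b} : Finset M)
        · have hdisj : Disjoint ({e1, w} : Finset M) ({e2, b} : Finset M) := by
            rw [Finset.disjoint_left]
            intro a ha ha'
            simp only [Finset.mem_insert, Finset.mem_singleton] at ha ha'
            rcases ha with rfl | rfl <;> rcases ha' with rfl | rfl <;>
              first | exact h12 rfl | exact hb1 rfl | exact hw2 rfl | exact hwb rfl
          refine helper_two hn2 c hnonneg hnorm hmono {e1, w} {e2, b} hdisj ?_ ?_ ?_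
          · rw [Finset.card_compl, Finset.card_union_of_disjoint hdisj,
              Finset.card_insert_of_notMem (by simp only [Finset.mem_singleton]; exact Ne.symm hw1),
              Finset.card_insert_of_notMem (by simp only [Finset.mem_singleton]; exact Ne.symm hb2),
              Finset.card_singleton, Finset.card_singleton]
            omega
          · intro e he
            rcases Finset.mem_insert.mp he with rfl | he'
            · rw [pair_sdiff_left (fun h => hw1 h.symm)]
              refine ⟨h1, ?_⟩
              intro z hz
              simp only [Finset.mem_union, Finset.mem_insert, Finset.mem_singleton,
                not_or] at hz
              exact hW z hz.1.1 hz.2.1 hz.2.2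
            · rw [Finset.mem_singleton] at he'; subst he'
              rw [pair_sdiff_right (fun h => hw1 h.symm)]
              exact ⟨(hE1 e2).trans (hmono 0 {e2} {e2, b} (by simp)), fun z _ => hE1 z⟩
          · intro e he
            rcases Finset.mem_insert.mp he with rfl | he'
            · rw [pair_sdiff_left (fun h => hb2 h.symm)]
              constructor
              · exact (hT3 w hw1 hw2 hwb b (by simp)).trans
                  (hmono 1 {w} {e1, w} (by simp))
              · intro z hz
                simp only [Finset.mem_union, Finset.mem_insert, Finset.mem_singleton,
                  not_or] at hz
                exact hT3 z hz.1.1 hz.2.1 hz.2.2 b (by simp)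
            · rw [Finset.mem_singleton] at he'; subst he'
              rw [pair_sdiff_right (fun h => hb2 h.symm)]
              constructor
              · exact (hT3 w hw1 hw2 hwb e2 (by simp)).trans
                  (hmono 1 {w} {e1, w} (by simp))
              · intro z hz
                simp only [Finset.mem_union, Finset.mem_insert, Finset.mem_singleton,
                  not_or] at hz
                exact hT3 z hz.1.1 hz.2.1 hz.2.2 e2 (by simp)
        · by_cases h2 : c 0 {w} ≤ c 0 ({e1, b} : Finset M)
          · have hdisj : Disjoint ({e2, w} : Finset M) ({e1, b} : Finset M) := by
              rw [Finset.disjoint_left]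
              intro a ha ha'
              simp only [Finset.mem_insert, Finset.mem_singleton] at ha ha'
              rcases ha with rfl | rfl <;> rcases ha' with rfl | rfl <;>
                first | exact h12 rfl | exact hb2 rfl | exact hw1 rfl | exact hwb rfl
            refine helper_two hn2 c hnonneg hnorm hmono {e2, w} {e1, b} hdisj ?_ ?_ ?_
            · rw [Finset.card_compl, Finset.card_union_of_disjoint hdisj,
                Finset.card_insert_of_notMem (by simp only [Finset.mem_singleton]; exact Ne.symm hw2),
                Finset.card_insert_of_notMem (by simp only [Finset.mem_singleton]; exact Ne.symm hb1),
                Finset.card_singleton, Finset.card_singleton]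
              omega
            · intro e he
              rcases Finset.mem_insert.mp he with rfl | he'
              · rw [pair_sdiff_left (fun h => hw2 h.symm)]
                refine ⟨h2, ?_⟩
                intro z hz
                simp only [Finset.mem_union, Finset.mem_insert, Finset.mem_singleton,
                  not_or] at hz
                exact hW z hz.2.1 hz.1.1 hz.2.2
              · rw [Finset.mem_singleton] at he'; subst he'
                rw [pair_sdiff_right (fun h => hw2 h.symm)]
                refine ⟨(hE2 b hb1).trans (hmono 0 {b} {e1, b} (by simp)), ?_⟩
                intro z hz
                simp only [Finset.mem_union, Finset.mem_insert, Finset.mem_singleton,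
                  not_or] at hz
                exact hE2 z hz.2.1
            · intro e he
              rcases Finset.mem_insert.mp he with rfl | he'
              · rw [pair_sdiff_left (fun h => hb1 h.symm)]
                constructor
                · exact (hT3 w hw1 hw2 hwb b (by simp)).trans
                    (hmono 1 {w} {e2, w} (by simp))
                · intro z hz
                  simp only [Finset.mem_union, Finset.mem_insert, Finset.mem_singleton,
                    not_or] at hz
                  exact hT3 z hz.2.1 hz.1.1 hz.2.2 b (by simp)
              · rw [Finset.mem_singleton] at he'; subst he'
                rw [pair_sdiff_right (fun h => hb1 h.symm)]
                constructor
                · exact (hT3 w hw1 hw2 hwb e1 (by simp)).trans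
                    (hmono 1 {w} {e2, w} (by simp))
                · intro z hz
                  simp only [Finset.mem_union, Finset.mem_insert, Finset.mem_singleton,
                    not_or] at hz
                  exact hT3 z hz.2.1 hz.1.1 hz.2.2 e1 (by simp)
          · by_cases h3 : c 0 {w} ≤ c 0 ({e1, e2} : Finset M)
            · have hbw : c 0 {b} < c 0 {w} :=
                lt_of_le_of_lt (hmono 0 {b} {e1, b} (by simp)) (not_le.mp h2)
              have hdisj : Disjoint ({b, w} : Finset M) ({e1, e2} : Finset M) := by
                rw [Finset.disjoint_left]
                intro a ha ha'
                simp only [Finset.mem_insert, Finset.mem_singleton] at ha ha'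
                rcases ha with rfl | rfl <;> rcases ha' with rfl | rfl <;>
                  first | exact hb1 rfl | exact hb2 rfl | exact hw1 rfl | exact hw2 rfl
              refine helper_two hn2 c hnonneg hnorm hmono {b, w} {e1, e2} hdisj ?_ ?_ ?_
              · rw [Finset.card_compl, Finset.card_union_of_disjoint hdisj,
                  Finset.card_insert_of_notMem (by simp only [Finset.mem_singleton]; exact Ne.symm hwb),
                  hP2, Finset.card_singleton]
                omega
              · intro e he
                rcases Finset.mem_insert.mp he with rfl | he'
                · rw [pair_sdiff_left (fun h => hwb h.symm)]
                  refine ⟨h3, ?_⟩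
                  intro z hz
                  simp only [Finset.mem_union, Finset.mem_insert, Finset.mem_singleton,
                    not_or] at hz
                  exact hW z hz.2.1 hz.2.2 hz.1.1
                · rw [Finset.mem_singleton] at he'; subst he'
                  rw [pair_sdiff_right (fun h => hwb h.symm)]
                  constructor
                  · exact hbw.le.trans h3
                  · intro z hz
                    simp only [Finset.mem_union, Finset.mem_insert, Finset.mem_singleton,
                      not_or] at hz
                    exact hbw.le.trans (hW z hz.2.1 hz.2.2 hz.1.1)
              · intro e he
                rcases Finset.mem_insert.mp he with rfl | he'
                · rw [pair_sdiff_left h12]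
                  constructor
                  · exact (hT3 w hw1 hw2 hwb e2 (by simp)).trans
                      (hmono 1 {w} {b, w} (by simp))
                  · intro z hz
                    simp only [Finset.mem_union, Finset.mem_insert, Finset.mem_singleton,
                      not_or] at hz
                    exact hT3 z hz.2.1 hz.2.2 hz.1.1 e2 (by simp)
                · rw [Finset.mem_singleton] at he'; subst he'
                  rw [pair_sdiff_right h12]
                  constructor
                  · exact (hT3 w hw1 hw2 hwb e1 (by simp)).trans
                      (hmono 1 {w} {b, w} (by simp))
                  · intro z hz
                    simp only [Finset.mem_union, Finset.mem_insert, Finset.mem_singleton,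
                      not_or] at hz
                    exact hT3 z hz.2.1 hz.2.2 hz.1.1 e1 (by simp)
            · -- triple {e1, e2, b} to agent 0
              have hT3card : ({e1, e2, b} : Finset M).card = 3 := by
                rw [Finset.card_insert_of_notMem (by
                    simp only [Finset.mem_insert, Finset.mem_singleton]
                    exact not_or.mpr ⟨h12, Ne.symm hb1⟩),
                  Finset.card_insert_of_notMem (by simp only [Finset.mem_singleton]; exact Ne.symm hb2),
                  Finset.card_singleton]
              refine helper_one c hnonneg hnorm hmono {e1, e2, b} ?_ ?_
              · rw [Finset.card_compl, hT3card]; omega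
              · intro e he z hz
                simp only [Finset.mem_insert, Finset.mem_singleton, not_or] at hz
                have hwz : c 0 {w} ≤ c 0 {z} := hW z hz.1 hz.2.1 hz.2.2
                simp only [Finset.mem_insert, Finset.mem_singleton] at he
                rcases he with rfl | rfl | rfl
                · rw [triple_sdiff_1 h12 (fun h => hb1 h.symm)]
                  exact (not_le.mp h1).le.trans hwz
                · rw [triple_sdiff_2 h12 (fun h => hb2 h.symm)]
                  exact (not_le.mp h2).le.trans hwz
                · rw [triple_sdiff_3 (fun h => hb1 h.symm) (fun h => hb2 h.symm)]
                  exact (not_le.mp h3).le.trans hwz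
end

section
/- Fix a chore-division instance with n agents and additive cost functions, and let α ≥ 1 and β > 0. Suppose there exists a partial allocation Y = (Y_1,…,Y_n) (pairwise disjoint bundles Y_i ⊆ M, not necessarily covering M) such that (i) Y is α-EFX, i.e., for all agents i, j and every e ∈ Y_i, c_i(Y_i \ {e}) ≤ α · c_i(Y_j), and (ii) for every unallocated chore e ∈ M \ (Y_1 ∪ … ∪ Y_n) and all agents i and j ≠ i, c_i({e}) ≤ β · c_i(Y_j). Then there exists a complete allocation of M that is max(α, β+1)-EFX. -/
open Finset


/-- Invariant: disjoint bundles, each containing a distinct `Y`-bundle, γ-EFX. -/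
def GoodAlloc {n : ℕ} {M : Type*} [DecidableEq M] (w : Fin n → M → ℝ) (γ : ℝ)
    (Y X : Fin n → Finset M) : Prop :=
  (∀ i j : Fin n, i ≠ j → Disjoint (X i) (X j)) ∧
  (∃ τ : Equiv.Perm (Fin n), ∀ j, Y (τ j) ⊆ X j) ∧
  (∀ i j : Fin n, ∀ f ∈ X i, ∑ g ∈ X i \ {f}, w i g ≤ γ * ∑ g ∈ X j, w i g)

private lemma sum_subset_le {M : Type*} {v : M → ℝ} (hv : ∀ e, 0 ≤ v e)
    {S T : Finset M} (h : S ⊆ T) : ∑ f ∈ S, v f ≤ ∑ f ∈ T, v f :=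
  Finset.sum_le_sum_of_subset_of_nonneg h (fun e _ _ => hv e)

/-- Key step: allocate one extra unallocated chore, preserving the invariant. -/
lemma step_lemma {n : ℕ} {M : Type*} [Fintype M] [DecidableEq M]
    (hn : 0 < n)
    (w : Fin n → M → ℝ) (hw : ∀ i e, 0 ≤ w i e)
    (γ β : ℝ) (hγ1 : 1 ≤ γ) (hγβ : β + 1 ≤ γ) (hβ : 0 < β)
    (Y : Fin n → Finset M)
    (hratio : ∀ e : M, (∀ i : Fin n, e ∉ Y i) →
      ∀ i j : Fin n, j ≠ i → w i e ≤ β * ∑ f ∈ Y j, w i f)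
    (X : Fin n → Finset M) (hX : GoodAlloc w γ Y X)
    (e : M) (he : ∀ i, e ∉ X i) :
    ∃ X' : Fin n → Finset M, GoodAlloc w γ Y X' ∧ (∃ i, e ∈ X' i) ∧
      ∀ f : M, (∃ i, f ∈ X i) → (∃ j, f ∈ X' j) := by
  classical
  obtain ⟨hdisj, ⟨τ, hτ⟩, hefx⟩ := hX
  set c : Fin n → Finset M → ℝ := fun i S => ∑ f ∈ S, w i f with hc
  have hcnn : ∀ i S, 0 ≤ c i S := fun i S => Finset.sum_nonneg (fun f _ => hw i f)
  have hcmono : ∀ (i : Fin n) {S T : Finset M}, S ⊆ T → c i S ≤ c i T :=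
    fun i S T h => sum_subset_le (hw i) h
  set valid : Equiv.Perm (Fin n) → Prop :=
    fun A => ∀ i j : Fin n, ∀ f ∈ X (A i), c i (X (A i) \ {f}) ≤ γ * c i (X j)
    with hvaliddef
  have hvalid1 : valid 1 := fun i j f hf => hefx i j f hf
  obtain ⟨A, hAmem, hAmin⟩ := Finset.exists_min_image
    (Finset.univ.filter fun A => valid A) (fun A => ∑ i, c i (X (A i)))
    ⟨1, Finset.mem_filter.mpr ⟨Finset.mem_univ _, hvalid1⟩⟩
  have hAvalid : valid A := (Finset.mem_filter.mp hAmem).2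
  -- There is a non-envious agent under the Φ-minimal valid assignment A.
  have hexists : ∃ i0 : Fin n, ∀ k, c i0 (X (A i0)) ≤ c i0 (X k) := by
    by_contra hcon
    push_neg at hcon
    choose envy henvy using hcon
    have hg : ∀ i : Fin n, ∃ k : Fin n, ∀ l, c i (X k) ≤ c i (X l) := by
      intro i
      obtain ⟨k, -, hk⟩ := Finset.exists_min_image Finset.univ (fun k => c i (X k))
        ⟨envy i, Finset.mem_univ _⟩
      exact ⟨k, fun l => hk l (Finset.mem_univ _)⟩
    choose g hgmin using hg
    have hglt : ∀ i, c i (X (g i)) < c i (X (A i)) :=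
      fun i => lt_of_le_of_lt (hgmin i (envy i)) (henvy i)
    set h : Fin n → Fin n := fun i => A.symm (g i) with hh
    have hAh : ∀ i, A (h i) = g i := fun i => A.apply_symm_apply (g i)
    -- find a periodic point of h
    set x : Fin n := ⟨0, hn⟩ with hx
    obtain ⟨a, b, hab, heq⟩ : ∃ a b : ℕ, a < b ∧ h^[a] x = h^[b] x := by
      obtain ⟨a, b, hne', heq⟩ := Fintype.exists_ne_map_eq_of_card_lt
        (fun t : Fin (n + 1) => h^[(t : ℕ)] x) (by simp)
      rcases lt_or_gt_of_ne hne' with hlt | hlt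
      · exact ⟨a, b, hlt, heq⟩
      · exact ⟨b, a, hlt, heq.symm⟩
    set y : Fin n := h^[a] x with hy
    set p : ℕ := b - a with hp
    have hppos : 0 < p := Nat.sub_pos_of_lt hab
    have hper : h^[p] y = y := by
      have : h^[p + a] x = h^[b] x := by rw [Nat.sub_add_cancel hab.le]
      rw [hy, ← Function.iterate_add_apply, this, ← heq]
    set O : Finset (Fin n) := (Finset.range p).image (fun t => h^[t] y) with hO
    have hyO : y ∈ O := Finset.mem_image.mpr ⟨0, Finset.mem_range.mpr hppos, rfl⟩
    have hmaps : ∀ u ∈ O, h u ∈ O := by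
      intro u hu
      obtain ⟨t, ht, rfl⟩ := Finset.mem_image.mp hu
      rw [Finset.mem_range] at ht
      rcases eq_or_lt_of_le (Nat.succ_le_of_lt ht) with h1 | h1
      · have he1 : h (h^[t] y) = y := by
          rw [show h (h^[t] y) = h^[t+1] y from (Function.iterate_succ_apply' h t y).symm]
          rw [show t + 1 = p from h1, hper]
        rw [he1]; exact hyO
      · refine Finset.mem_image.mpr ⟨t + 1, Finset.mem_range.mpr h1, ?_⟩
        rw [Function.iterate_succ_apply']
    have hsurj : ∀ v ∈ O, ∃ u ∈ O, h u = v := by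
      intro v hv
      obtain ⟨t, ht, rfl⟩ := Finset.mem_image.mp hv
      rw [Finset.mem_range] at ht
      rcases Nat.eq_zero_or_pos t with rfl | htpos
      · refine ⟨h^[p - 1] y, Finset.mem_image.mpr ⟨p - 1, Finset.mem_range.mpr (Nat.sub_lt hppos one_pos), rfl⟩, ?_⟩
        rw [show h (h^[p-1] y) = h^[p-1+1] y from (Function.iterate_succ_apply' h (p-1) y).symm]
        rw [Nat.sub_add_cancel hppos, hper]
        rfl
      · refine ⟨h^[t - 1] y, Finset.mem_image.mpr ⟨t - 1, Finset.mem_range.mpr (lt_of_le_of_lt (Nat.sub_le t 1) ht), rfl⟩, ?_⟩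
        rw [show h (h^[t-1] y) = h^[t-1+1] y from (Function.iterate_succ_apply' h (t-1) y).symm]
        rw [Nat.sub_add_cancel htpos]
    have hinjO : ∀ ⦃u : Fin n⦄, u ∈ O → ∀ ⦃v : Fin n⦄, v ∈ O → h u = h v → u = v := by
      have := Finset.inj_on_of_surj_on_of_card_le (s := O) (t := O)
        (fun a _ => h a) (fun a ha => hmaps a ha)
        (fun b hb => by obtain ⟨u, hu, huv⟩ := hsurj b hb; exact ⟨u, hu, huv⟩)
        le_rfl
      intro u hu v hv huv
      exact this hu hv huv
    set A' : Fin n → Fin n := fun i => if i ∈ O then g i else A i with hA'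
    have hA'key : ∀ i, A' i = A (if i ∈ O then h i else i) := by
      intro i; by_cases hi : i ∈ O <;> simp [hA', hi, hAh]
    have hA'inj : Function.Injective A' := by
      intro u v huv
      rw [hA'key, hA'key] at huv
      have huv' := A.injective huv
      by_cases hu : u ∈ O <;> by_cases hv : v ∈ O
      · simp only [hu, hv, if_true] at huv'; exact hinjO hu hv huv'
      · simp only [hu, hv, if_true, if_false] at huv'
        exact absurd (huv' ▸ hmaps u hu) hv
      · simp only [hu, hv, if_true, if_false] at huv'
        exact absurd (huv'.symm ▸ hmaps v hv) hu
      · simpa [hu, hv] using huv'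
    set A2 : Equiv.Perm (Fin n) :=
      Equiv.ofBijective A' (Finite.injective_iff_bijective.mp hA'inj) with hA2
    have hA2app : ∀ i, A2 i = A' i := fun i => rfl
    have hA2valid : valid A2 := by
      intro i j f hf
      rw [hA2app] at hf ⊢
      by_cases hi : i ∈ O
      · simp only [hA', hi, if_true] at hf ⊢
        calc c i (X (g i) \ {f}) ≤ c i (X (g i)) := hcmono i (Finset.sdiff_subset)
          _ ≤ c i (X j) := hgmin i j
          _ ≤ γ * c i (X j) := le_mul_of_one_le_left (hcnn i _) hγ1
      · simp only [hA', hi, if_false] at hf ⊢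
        exact hAvalid i j f hf
    have hlt : ∑ i, c i (X (A2 i)) < ∑ i, c i (X (A i)) := by
      apply Finset.sum_lt_sum
      · intro i _
        rw [hA2app]
        by_cases hi : i ∈ O
        · simp only [hA', hi, if_true]; exact hgmin i (A i)
        · simp [hA', hi]
      · exact ⟨y, Finset.mem_univ _, by rw [hA2app]; simp only [hA', hyO, if_true]; exact hglt y⟩
    have := hAmin A2 (Finset.mem_filter.mpr ⟨Finset.mem_univ _, hA2valid⟩)
    exact absurd this (not_le.mpr hlt)
  obtain ⟨i0, hi0⟩ := hexists
  -- the new allocation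
  set X' : Fin n → Finset M := fun j => if j = i0 then insert e (X (A i0)) else X (A j) with hX'
  have hsub : ∀ j, X (A j) ⊆ X' j := by
    intro j
    by_cases hj : j = i0
    · subst hj; simp [hX', Finset.subset_insert]
    · simp [hX', hj]
  have hXle : ∀ i j, c i (X (A j)) ≤ c i (X' j) := fun i j => hcmono i (hsub j)
  have hpool : ∀ k, e ∉ Y k := by
    intro k hek
    have h1 := hτ (τ.symm k)
    rw [Equiv.apply_symm_apply] at h1
    exact he (τ.symm k) (h1 hek)
  have hwe : ∀ j, j ≠ i0 → w i0 e ≤ β * c i0 (X (A j)) := by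
    intro j hj
    by_cases hk : τ (A j) = i0
    · have hk' : τ (A i0) ≠ i0 := by
        intro h'
        exact hj (A.injective (τ.injective (hk.trans h'.symm)))
      calc w i0 e ≤ β * c i0 (Y (τ (A i0))) := hratio e hpool i0 _ hk'
        _ ≤ β * c i0 (X (A i0)) := by
            exact mul_le_mul_of_nonneg_left (hcmono i0 (hτ (A i0))) hβ.le
        _ ≤ β * c i0 (X (A j)) := mul_le_mul_of_nonneg_left (hi0 (A j)) hβ.le
    · calc w i0 e ≤ β * c i0 (Y (τ (A j))) := hratio e hpool i0 _ hk
        _ ≤ β * c i0 (X (A j)) := mul_le_mul_of_nonneg_left (hcmono i0 (hτ (A j))) hβ.le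
  have hmemX' : ∀ k x, x ∈ X' k → (k = i0 ∧ x = e) ∨ x ∈ X (A k) := by
    intro k x hx
    by_cases hk : k = i0
    · subst hk
      simp only [hX', if_true] at hx
      rcases Finset.mem_insert.mp hx with rfl | hx'
      · exact Or.inl ⟨rfl, rfl⟩
      · exact Or.inr hx'
    · simp only [hX', hk, if_false] at hx
      exact Or.inr hx
  refine ⟨X', ⟨?_, ?_, ?_⟩, ⟨i0, by simp [hX']⟩, ?_⟩
  · -- disjointness
    intro i j hij
    rw [Finset.disjoint_left]
    intro x hxi hxj
    rcases hmemX' i x hxi with ⟨hi, rfl⟩ | hxi'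
    · rcases hmemX' j x hxj with ⟨hj, -⟩ | hxj'
      · exact hij (hi.trans hj.symm)
      · exact he (A j) hxj'
    · rcases hmemX' j x hxj with ⟨-, rfl⟩ | hxj'
      · exact he (A i) hxi'
      · exact (Finset.disjoint_left.mp (hdisj (A i) (A j)
          (fun h' => hij (A.injective h'))) hxi') hxj'
  · -- permutation containment
    exact ⟨A.trans τ, fun j => (hτ (A j)).trans (hsub j)⟩
  · -- EFX
    intro i j f hf
    by_cases hji : j = i
    · subst hji
      calc ∑ g ∈ X' j \ {f}, w j g ≤ c j (X' j) := hcmono j Finset.sdiff_subset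
        _ ≤ γ * c j (X' j) := le_mul_of_one_le_left (hcnn j _) hγ1
    · by_cases hi : i = i0
      · subst hi
        have hf' : f ∈ insert e (X (A i)) := by simpa [hX'] using hf
        by_cases hfe : f = e
        · subst hfe
          have hrw : X' i \ {f} = X (A i) := by
            simp only [hX', if_true, Finset.sdiff_singleton_eq_erase]
            exact Finset.erase_insert (he (A i))
          rw [hrw]
          calc c i (X (A i)) ≤ c i (X (A j)) := hi0 (A j)
            _ ≤ c i (X' j) := hXle i j
            _ ≤ γ * c i (X' j) := le_mul_of_one_le_left (hcnn i _) hγ1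
        · have hfX : f ∈ X (A i) := by
            rcases Finset.mem_insert.mp hf' with h1 | h1
            · exact absurd h1 hfe
            · exact h1
          have hji0 : j ≠ i := by
            intro h'; subst h'
            exact hji rfl
          have hrw : X' i \ {f} = insert e ((X (A i)).erase f) := by
            simp only [hX', if_true, Finset.sdiff_singleton_eq_erase]
            exact Finset.erase_insert_of_ne (fun h' => hfe h'.symm)
          have hsum : ∑ g ∈ X' i \ {f}, w i g
              = w i e + ∑ g ∈ (X (A i)).erase f, w i g := by
            rw [hrw]
            exact Finset.sum_insert (fun h' => he (A i) (Finset.erase_subset _ _ h'))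
          rw [hsum]
          have h1 : ∑ g ∈ (X (A i)).erase f, w i g ≤ c i (X (A j)) :=
            le_trans (hcmono i (Finset.erase_subset _ _)) (hi0 (A j))
          have h2 : w i e ≤ β * c i (X (A j)) := hwe j hji0
          calc w i e + ∑ g ∈ (X (A i)).erase f, w i g
              ≤ β * c i (X (A j)) + c i (X (A j)) := add_le_add h2 h1
            _ = (β + 1) * c i (X (A j)) := by ring
            _ ≤ γ * c i (X (A j)) := mul_le_mul_of_nonneg_right hγβ (hcnn i _)
            _ ≤ γ * c i (X' j) := by
                exact mul_le_mul_of_nonneg_left (hXle i j) (le_trans zero_le_one hγ1)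
      · have hfX : f ∈ X (A i) := by simpa [hX', hi] using hf
        have hXeq : X' i = X (A i) := by simp [hX', hi]
        rw [hXeq]
        calc ∑ g ∈ X (A i) \ {f}, w i g ≤ γ * c i (X (A j)) := hAvalid i (A j) f hfX
          _ ≤ γ * c i (X' j) :=
            mul_le_mul_of_nonneg_left (hXle i j) (le_trans zero_le_one hγ1)
  · -- coverage
    intro f ⟨i, hfi⟩
    refine ⟨A.symm i, hsub (A.symm i) ?_⟩
    rw [Equiv.apply_symm_apply]
    exact hfi

lemma complete_lemma {n : ℕ} {M : Type*} [Fintype M] [DecidableEq M]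
    (hn : 0 < n)
    (w : Fin n → M → ℝ) (hw : ∀ i e, 0 ≤ w i e)
    (γ β : ℝ) (hγ1 : 1 ≤ γ) (hγβ : β + 1 ≤ γ) (hβ : 0 < β)
    (Y : Fin n → Finset M)
    (hratio : ∀ e : M, (∀ i : Fin n, e ∉ Y i) →
      ∀ i j : Fin n, j ≠ i → w i e ≤ β * ∑ f ∈ Y j, w i f) :
    ∀ (k : ℕ) (X : Fin n → Finset M), GoodAlloc w γ Y X →
      (Finset.univ.filter (fun e : M => ∀ i, e ∉ X i)).card ≤ k →
      ∃ X', GoodAlloc w γ Y X' ∧ ∀ e : M, ∃ i, e ∈ X' i := by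
  classical
  intro k
  induction k with
  | zero =>
    intro X hX hcard
    refine ⟨X, hX, ?_⟩
    intro e
    by_contra hcon
    push_neg at hcon
    have : e ∈ Finset.univ.filter (fun e : M => ∀ i, e ∉ X i) :=
      Finset.mem_filter.mpr ⟨Finset.mem_univ _, hcon⟩
    have := Finset.card_pos.mpr ⟨e, this⟩
    omega
  | succ k ih =>
    intro X hX hcard
    by_cases hfull : ∀ e : M, ∃ i, e ∈ X i
    · exact ⟨X, hX, hfull⟩
    · push_neg at hfull
      obtain ⟨e, he⟩ := hfull
      obtain ⟨X', hX', ⟨i₀, hei₀⟩, hcov⟩ :=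
        step_lemma hn w hw γ β hγ1 hγβ hβ Y hratio X hX e he
      apply ih X' hX'
      have hemem : e ∈ Finset.univ.filter (fun f : M => ∀ i, f ∉ X i) :=
        Finset.mem_filter.mpr ⟨Finset.mem_univ _, he⟩
      have hsub : Finset.univ.filter (fun f : M => ∀ i, f ∉ X' i) ⊆
          (Finset.univ.filter (fun f : M => ∀ i, f ∉ X i)).erase e := by
        intro f hf
        rw [Finset.mem_filter] at hf
        have hfX : ∀ i, f ∉ X i := by
          intro i hfi
          obtain ⟨j, hj⟩ := hcov f ⟨i, hfi⟩
          exact hf.2 j hj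
        have hfe : f ≠ e := fun h' => hf.2 i₀ (h' ▸ hei₀)
        exact Finset.mem_erase.mpr ⟨hfe, Finset.mem_filter.mpr ⟨Finset.mem_univ _, hfX⟩⟩
      calc (Finset.univ.filter (fun f : M => ∀ i, f ∉ X' i)).card
          ≤ ((Finset.univ.filter (fun f : M => ∀ i, f ∉ X i)).erase e).card :=
            Finset.card_le_card hsub
        _ = (Finset.univ.filter (fun f : M => ∀ i, f ∉ X i)).card - 1 :=
            Finset.card_erase_of_mem hemem
        _ ≤ k := by omega

/-- The approximation framework: given a partial `α`-EFX allocation `Y` in which every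
unallocated chore costs agent `i` at most `β` times the cost of any other agent's bundle,
a complete `max(α, β+1)`-EFX allocation exists. Cost functions are additive with
(nonnegative) item costs `w`. -/
theorem framework_max_alpha_beta_efx
    (n : ℕ) (hn : 1 ≤ n) (M : Type*) [Fintype M] [DecidableEq M]
    (w : Fin n → M → ℝ) (hw : ∀ i e, 0 ≤ w i e)
    (α β : ℝ) (hα : 1 ≤ α) (hβ : 0 < β)
    (Y : Fin n → Finset M)
    (hYdisj : ∀ i j : Fin n, i ≠ j → Disjoint (Y i) (Y j))
    (hYefx : ∀ i j : Fin n, ∀ e ∈ Y i,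
      ∑ f ∈ Y i \ {e}, w i f ≤ α * ∑ f ∈ Y j, w i f)
    (hratio : ∀ e : M, (∀ i : Fin n, e ∉ Y i) →
      ∀ i j : Fin n, j ≠ i → w i e ≤ β * ∑ f ∈ Y j, w i f) :
    ∃ X : Fin n → Finset M, IsAllocation X ∧
      ∀ i j : Fin n, ∀ e ∈ X i,
        ∑ f ∈ X i \ {e}, w i f ≤ max α (β + 1) * ∑ f ∈ X j, w i f := by
  classical
  set γ : ℝ := max α (β + 1) with hγ
  have hγ1 : 1 ≤ γ := le_trans hα (le_max_left _ _)
  have hγβ : β + 1 ≤ γ := le_max_right _ _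
  have hgood : GoodAlloc w γ Y Y := by
    refine ⟨hYdisj, ⟨1, fun j => by simp⟩, ?_⟩
    intro i j f hf
    calc ∑ g ∈ Y i \ {f}, w i g ≤ α * ∑ g ∈ Y j, w i g := hYefx i j f hf
      _ ≤ γ * ∑ g ∈ Y j, w i g :=
        mul_le_mul_of_nonneg_right (le_max_left _ _)
          (Finset.sum_nonneg fun g _ => hw i g)
  obtain ⟨X, ⟨hXdisj, -, hXefx⟩, hXcover⟩ :=
    complete_lemma hn w hw γ β hγ1 hγβ hβ Y hratio
      (Finset.univ.filter (fun e : M => ∀ i, e ∉ Y i)).card Y hgood le_rfl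
  exact ⟨X, ⟨hXdisj, hXcover⟩, hXefx⟩
end

section
/- Fix a chore-division instance with n agents, m ≥ n chores, and additive cost functions. Suppose all agents agree on the set of the n most costly chores: there exists a set T ⊆ M with |T| = n such that for every agent i, every e ∈ T and every f ∈ M \ T, c_i({e}) ≥ c_i({f}). Then a 2-EFX allocation exists. -/
private lemma aux_step {n : ℕ} (hn : 1 ≤ n) {M : Type*} [Fintype M] [DecidableEq M]
    (w : Fin n → M → ℝ) (hw : ∀ i e, 0 ≤ w i e) (T : Finset M)
    (htop : ∀ i : Fin n, ∀ e ∈ T, ∀ f : M, f ∉ T → w i f ≤ w i e) :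
    ∀ (k : ℕ) (U : Finset M) (X : Fin n → Finset M), U.card = k →
      (∀ e ∈ U, e ∉ T) →
      (∀ i j : Fin n, i ≠ j → Disjoint (X i) (X j)) →
      (∀ i : Fin n, ∃ t ∈ T, t ∈ X i) →
      (∀ e : M, e ∉ U → ∃ i, e ∈ X i) →
      (∀ e ∈ U, ∀ i, e ∉ X i) →
      (∀ i j : Fin n, ∀ e ∈ X i, ∑ f ∈ X i \ {e}, w i f ≤ 2 * ∑ f ∈ X j, w i f) →
      ∃ X' : Fin n → Finset M, IsAllocation X' ∧
        ∀ i j : Fin n, ∀ e ∈ X' i, ∑ f ∈ X' i \ {e}, w i f ≤ 2 * ∑ f ∈ X' j, w i f := by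
  intro k
  induction k with
  | zero =>
      intro U X hcard _ hdisj _ hcover _ hS3
      refine ⟨X, ⟨hdisj, ?_⟩, hS3⟩
      intro e
      exact hcover e (by simp [Finset.card_eq_zero.mp hcard])
  | succ k IH =>
      intro U X hcard hUT hdisj htops hcover hunas hS3
      classical
      -- pick f ∈ U
      have hUne : U.Nonempty := Finset.card_pos.mp (by omega)
      obtain ⟨f, hfU⟩ := hUne
      have hfT : f ∉ T := hUT f hfU
      have hfX : ∀ l, f ∉ X l := fun l => hunas f hfU l
      -- the min-bundle map
      have hmin : ∀ i : Fin n, ∃ j : Fin n, ∀ l : Fin n,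
          (∑ x ∈ X j, w i x) ≤ ∑ x ∈ X l, w i x := by
        intro i
        obtain ⟨j, -, hj⟩ := Finset.exists_min_image Finset.univ
          (fun j => ∑ x ∈ X j, w i x) ⟨⟨0, hn⟩, Finset.mem_univ _⟩
        exact ⟨j, fun l => hj l (Finset.mem_univ l)⟩
      choose m hm using hmin
      -- periodic point of m
      have hper : ∃ (a : Fin n) (K : ℕ), 0 < K ∧ m^[K] a = a := by
        obtain ⟨i, j, hne, heq⟩ := Fintype.exists_ne_map_eq_of_card_lt
          (fun j : Fin (n+1) => m^[(j : ℕ)] ⟨0, hn⟩) (by simp)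
        rcases hne.lt_or_gt with h | h
        · refine ⟨m^[(i : ℕ)] ⟨0, hn⟩, (j : ℕ) - i, by omega, ?_⟩
          rw [← Function.iterate_add_apply, Nat.sub_add_cancel h.le]
          exact heq.symm
        · refine ⟨m^[(j : ℕ)] ⟨0, hn⟩, (i : ℕ) - j, by omega, ?_⟩
          rw [← Function.iterate_add_apply, Nat.sub_add_cancel h.le]
          exact heq
      obtain ⟨a, K, hK, haK⟩ := hper
      set O : Finset (Fin n) := (Finset.range K).image (fun j => m^[j] a) with hO
      have haO : a ∈ O := by
        refine Finset.mem_image.mpr ⟨0, Finset.mem_range.mpr hK, ?_⟩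
        simp
      have hmO : ∀ x ∈ O, m x ∈ O := by
        intro x hx
        obtain ⟨j, hj, rfl⟩ := Finset.mem_image.mp hx
        have hj' := Finset.mem_range.mp hj
        have : m (m^[j] a) = m^[j+1] a := (Function.iterate_succ_apply' m j a).symm
        rw [this]
        rcases eq_or_lt_of_le (Nat.succ_le_of_lt hj') with h | h
        · rw [show j+1 = K from h, haK]; exact haO
        · exact Finset.mem_image.mpr ⟨j+1, Finset.mem_range.mpr h, rfl⟩
      have hback : ∀ x ∈ O, m^[K-1] (m x) = x := by
        intro x hx
        obtain ⟨j, hj, rfl⟩ := Finset.mem_image.mp hx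
        have h1 : m (m^[j] a) = m^[j+1] a := (Function.iterate_succ_apply' m j a).symm
        rw [h1, ← Function.iterate_add_apply]
        have h2 : K - 1 + (j + 1) = j + K := by omega
        rw [h2, Function.iterate_add_apply, haK]
      -- the relabeling map
      set g : Fin n → Fin n := fun i => if i ∈ O then m i else i with hg
      have hginj : Function.Injective g := by
        intro x y hxy
        by_cases hx : x ∈ O <;> by_cases hy : y ∈ O
        · simp only [hg, if_pos hx, if_pos hy] at hxy
          rw [← hback x hx, hxy, hback y hy]
        · simp only [hg, if_pos hx, if_neg hy] at hxy
          exact absurd (hxy ▸ hmO x hx) hy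
        · simp only [hg, if_neg hx, if_pos hy] at hxy
          exact absurd (by rw [hxy]; exact hmO y hy) hx
        · simpa [hg, if_neg hx, if_neg hy] using hxy
      have hgsurj : Function.Surjective g := Finite.surjective_of_injective hginj
      set Y : Fin n → Finset M := fun i => X (g i) with hY
      have hga : g a = m a := by simp [hg, if_pos haO]
      -- a holds its min bundle
      have hminA : ∀ l : Fin n, (∑ x ∈ Y a, w a x) ≤ ∑ x ∈ X l, w a x := by
        intro l
        simp only [hY, hga]
        exact hm a l
      set X' : Fin n → Finset M := fun i => if i = a then insert f (Y a) else Y i with hX'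
      have hYX' : ∀ j, Y j ⊆ X' j := by
        intro j
        by_cases h : j = a
        · subst h; simp [hX', Finset.subset_insert]
        · simp [hX', if_neg h]
      have hX'sub : ∀ j, X' j ⊆ insert f (Y j) := by
        intro j
        by_cases h : j = a
        · subst h; simp [hX']
        · simp [hX', if_neg h, Finset.subset_insert]
      have hfY : ∀ j, f ∉ Y j := fun j => hfX (g j)
      have hsum_mono : ∀ i j, (∑ x ∈ Y j, w i x) ≤ ∑ x ∈ X' j, w i x := fun i j =>
        Finset.sum_le_sum_of_subset_of_nonneg (hYX' j) (fun x _ _ => hw i x)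
      -- apply IH
      refine IH (U.erase f) X' ?_ ?_ ?_ ?_ ?_ ?_ ?_
      · rw [Finset.card_erase_of_mem hfU, hcard]; omega
      · exact fun e he => hUT e (Finset.mem_of_mem_erase he)
      · -- disjoint
        intro i j hne
        have hYdisj : Disjoint (Y i) (Y j) := hdisj (g i) (g j) (fun h => hne (hginj h))
        by_cases hi : i = a
        · have hj : ¬ j = a := fun h => hne (hi.trans h.symm)
          simp only [hX', if_pos hi, if_neg hj]
          exact Finset.disjoint_insert_left.mpr ⟨hfY j, hi ▸ hYdisj⟩
        · by_cases hj : j = a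
          · simp only [hX', if_neg hi, if_pos hj]
            exact Finset.disjoint_insert_right.mpr ⟨hfY i, hj ▸ hYdisj⟩
          · simp only [hX', if_neg hi, if_neg hj]
            exact hYdisj
      · -- tops
        intro i
        obtain ⟨t, htT, htX⟩ := htops (g i)
        exact ⟨t, htT, hYX' i htX⟩
      · -- cover
        intro e he
        by_cases hef : e = f
        · subst hef
          exact ⟨a, by simp [hX']⟩
        · have heU : e ∉ U := fun h => he (Finset.mem_erase.mpr ⟨hef, h⟩)
          obtain ⟨l, hl⟩ := hcover e heU
          obtain ⟨i, rfl⟩ := hgsurj l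
          exact ⟨i, hYX' i hl⟩
      · -- unassigned
        intro e he i hei
        have heU : e ∈ U := Finset.mem_of_mem_erase he
        have hef : e ≠ f := (Finset.mem_erase.mp he).1
        rcases Finset.mem_insert.mp (hX'sub i hei) with h | h
        · exact hef h
        · exact hunas e heU (g i) h
      · -- S3
        intro i j e he
        by_cases hi : i = a
        · rw [hi] at he ⊢
          have hXa : X' a = insert f (Y a) := by simp [hX']
          obtain ⟨t, htT, htY⟩ : ∃ t ∈ T, t ∈ Y j := htops (g j)
          have hwf : w a f ≤ ∑ x ∈ Y j, w a x := by
            calc w a f ≤ w a t := htop a t htT f hfT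
            _ ≤ ∑ x ∈ Y j, w a x :=
              Finset.single_le_sum (fun x _ => hw a x) htY
          have hYa : (∑ x ∈ Y a, w a x) ≤ ∑ x ∈ Y j, w a x := hminA (g j)
          have hL : (∑ x ∈ X' a \ {e}, w a x) ≤ ∑ x ∈ X' a, w a x :=
            Finset.sum_le_sum_of_subset_of_nonneg (Finset.sdiff_subset) (fun x _ _ => hw a x)
          have hins : (∑ x ∈ X' a, w a x) = w a f + ∑ x ∈ Y a, w a x := by
            rw [hXa, Finset.sum_insert (hfY a)]
          have := hsum_mono a j
          calc (∑ x ∈ X' a \ {e}, w a x) ≤ ∑ x ∈ X' a, w a x := hL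
            _ = w a f + ∑ x ∈ Y a, w a x := hins
            _ ≤ (∑ x ∈ Y j, w a x) + ∑ x ∈ Y j, w a x := add_le_add hwf hYa
            _ = 2 * ∑ x ∈ Y j, w a x := by ring
            _ ≤ 2 * ∑ x ∈ X' j, w a x := by linarith [hsum_mono a j]
        · have hXi : X' i = Y i := by simp [hX', if_neg hi]
          rw [hXi] at he ⊢
          by_cases hiO : i ∈ O
          · have hYi : Y i = X (m i) := by simp [hY, hg, if_pos hiO]
            have h0 : (∑ x ∈ Y i \ {e}, w i x) ≤ ∑ x ∈ Y i, w i x :=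
              Finset.sum_le_sum_of_subset_of_nonneg (Finset.sdiff_subset) (fun x _ _ => hw i x)
            have h1 : (∑ x ∈ Y i, w i x) ≤ ∑ x ∈ Y j, w i x := by
              rw [hYi]; exact hm i (g j)
            have h2 : (0:ℝ) ≤ ∑ x ∈ X' j, w i x :=
              Finset.sum_nonneg (fun x _ => hw i x)
            have h3 := hsum_mono i j
            linarith
          · have hYi : Y i = X i := by simp [hY, hg, if_neg hiO]
            rw [hYi] at he ⊢
            have := hS3 i (g j) e he
            have h3 := hsum_mono i j
            have : (∑ x ∈ X i \ {e}, w i x) ≤ 2 * ∑ x ∈ Y j, w i x := by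
              simpa [hY] using this
            linarith

/-- Top-`n` agreement: if all agents (with additive costs given by item costs `w`)
agree on the set of the `n` most costly chores, a `2`-EFX allocation exists. -/
theorem two_efx_top_n_agreement
    (n : ℕ) (hn : 1 ≤ n) (M : Type*) [Fintype M] [DecidableEq M]
    (hm : n ≤ Fintype.card M)
    (w : Fin n → M → ℝ) (hw : ∀ i e, 0 ≤ w i e)
    (T : Finset M) (hT : T.card = n)
    (htop : ∀ i : Fin n, ∀ e ∈ T, ∀ f : M, f ∉ T → w i f ≤ w i e) :
    ∃ X : Fin n → Finset M, IsAllocation X ∧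
      ∀ i j : Fin n, ∀ e ∈ X i,
        ∑ f ∈ X i \ {e}, w i f ≤ 2 * ∑ f ∈ X j, w i f := by
  classical
  have E : T ≃ Fin n := T.equivFinOfCardEq hT
  set X₀ : Fin n → Finset M := fun i => {((E.symm i : T) : M)} with hX₀
  set U₀ : Finset M := Finset.univ \ T with hU₀
  refine aux_step hn w hw T htop U₀.card U₀ X₀ rfl ?_ ?_ ?_ ?_ ?_ ?_
  · intro e he
    exact (Finset.mem_sdiff.mp he).2
  · intro i j hne
    simp only [hX₀, Finset.disjoint_singleton]
    intro h
    exact hne (E.symm.injective (Subtype.coe_injective h))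
  · intro i
    exact ⟨((E.symm i : T) : M), (E.symm i).2, by simp [hX₀]⟩
  · intro e he
    have heT : e ∈ T := by
      by_contra h
      exact he (Finset.mem_sdiff.mpr ⟨Finset.mem_univ e, h⟩)
    refine ⟨E ⟨e, heT⟩, ?_⟩
    simp [hX₀]
  · intro e he i hei
    have heT : e ∉ T := (Finset.mem_sdiff.mp he).2
    simp only [hX₀, Finset.mem_singleton] at hei
    exact heT (hei ▸ (E.symm i).2)
  · intro i j e he
    simp only [hX₀, Finset.mem_singleton] at he
    subst he
    simp only [hX₀, Finset.sdiff_self, Finset.sum_empty]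
    have h0 : (0:ℝ) ≤ ∑ f ∈ ({((E.symm j : T) : M)} : Finset M), w i f :=
      Finset.sum_nonneg (fun x _ => hw i x)
    linarith
end
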